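/- arXiv:2203.03697 — 6 statements merged into one kernel-verified Lean document; each statement's English description precedes it below -/
import Mathlib

section
/- Let G = (V,E) be a finite connected graph and let w, w' : E → ℝ be two edge-weight functions on the same edge set. Suppose S ⊆ E is a set of edges such that for every e ∈ S, the set {f ∈ E : w'(f) ≤ w'(e)} is contained in the set {f ∈ E : w(f) ≤ w(e)}. Then coverage(S,(G,w)) ≤ coverage(S,(G,w')). -/
open Classical

/-- The total weight of (the edges of) a graph `T`, viewed as a candidate spanning tree. -/
noncomputable def treeWeight {V : Type*} [Finite V] (w : Sym2 V → ℝ) (T : SimpleGraph V) : ℝ :=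
  ∑ e ∈ T.edgeSet.toFinite.toFinset, w e

/-- `T` is a spanning tree of `G`: a subgraph of `G` (on the same vertex set) that is a tree. -/
def IsSpanningTree {V : Type*} (G T : SimpleGraph V) : Prop := T ≤ G ∧ T.IsTree

/-- `T` is a minimum spanning tree of `(G, w)`. -/
def IsMST {V : Type*} [Finite V] (G : SimpleGraph V) (w : Sym2 V → ℝ)
    (T : SimpleGraph V) : Prop :=
  IsSpanningTree G T ∧ ∀ T', IsSpanningTree G T' → treeWeight w T ≤ treeWeight w T'

/-- `coverage(S, (G, w))`: the minimum, over all minimum spanning trees `T` of `(G, w)`,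
of the number of edges that `T` shares with `S`. -/
noncomputable def coverage {V : Type*} [Finite V] (G : SimpleGraph V) (w : Sym2 V → ℝ)
    (S : Set (Sym2 V)) : ℕ :=
  sInf { n | ∃ T, IsMST G w T ∧ n = Nat.card ↥(T.edgeSet ∩ S) }

section MSTAux
open SimpleGraph
variable {V : Type*}


/-- Walking preserves which "side" of a deleted edge you can reach. -/
lemma side_step {H : SimpleGraph V} {x y u v : V} (p : H.Walk u v)
    (hu : (H.deleteEdges {s(x,y)}).Reachable u x ∨ (H.deleteEdges {s(x,y)}).Reachable u y) :
    (H.deleteEdges {s(x,y)}).Reachable v x ∨ (H.deleteEdges {s(x,y)}).Reachable v y := by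
  induction p with
  | nil => exact hu
  | @cons u c v h p ih =>
    apply ih
    by_cases he : s(u, c) = s(x, y)
    · rw [Sym2.eq_iff] at he
      rcases he with ⟨rfl, rfl⟩ | ⟨rfl, rfl⟩
      · right; exact Reachable.refl _
      · left; exact Reachable.refl _
    · have hadj : (H.deleteEdges {s(x,y)}).Adj c u := by
        rw [deleteEdges_adj]
        refine ⟨h.symm, ?_⟩
        simp only [Set.mem_singleton_iff, Sym2.eq_swap]
        exact he
      rcases hu with h1 | h1
      · exact Or.inl (hadj.reachable.trans h1)
      · exact Or.inr (hadj.reachable.trans h1)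

lemma connected_deleteEdges {H : SimpleGraph V} (hH : H.Connected) {x y : V}
    (hr : (H.deleteEdges {s(x,y)}).Reachable x y) :
    (H.deleteEdges {s(x,y)}).Connected := by
  have key : ∀ v, (H.deleteEdges {s(x,y)}).Reachable v x := by
    intro v
    obtain ⟨p⟩ := hH.preconnected x v
    rcases side_step p (Or.inl (Reachable.refl _)) with h1 | h1
    · exact h1
    · exact h1.trans hr.symm
  have hpre : (H.deleteEdges {s(x,y)}).Preconnected := fun u v => (key u).trans (key v).symm
  have : Nonempty V := hH.nonempty
  exact Connected.mk hpre

lemma exists_spanning_tree [Finite V] {G : SimpleGraph V} (hG : G.Connected) :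
    ∃ T, IsSpanningTree G T := by
  have : Finite (Sym2 V) := inferInstance
  set N : Set ℕ := {n | ∃ H : SimpleGraph V, H ≤ G ∧ H.Connected ∧ n = H.edgeSet.ncard} with hN
  have hNe : N.Nonempty := ⟨G.edgeSet.ncard, G, le_refl _, hG, rfl⟩
  obtain ⟨H, hle, hconn, hcard⟩ := Nat.sInf_mem hNe
  refine ⟨H, hle, hconn, ?_⟩
  intro u c hc
  cases c with
  | nil => exact hc.ne_nil rfl
  | @cons _ x _ hadj p =>
    have hmem : s(u, x) ∈ (SimpleGraph.Walk.cons hadj p).edges := by simp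
    have hreach : (H \ SimpleGraph.fromEdgeSet {s(u, x)}).Reachable u x :=
      ((adj_and_reachable_delete_edges_iff_exists_cycle).2 ⟨u, _, hc, hmem⟩).2
    have hreach' : (H.deleteEdges {s(u, x)}).Reachable u x := hreach
    have hconn' := connected_deleteEdges hconn hreach'
    have hlt : (H.deleteEdges {s(u,x)}).edgeSet.ncard < H.edgeSet.ncard := by
      rw [edgeSet_deleteEdges]
      apply Set.ncard_lt_ncard
      · constructor
        · exact Set.diff_subset
        · intro hsub
          have h2 : s(u,x) ∈ H.edgeSet \ {s(u,x)} := hsub ((SimpleGraph.mem_edgeSet H).2 hadj)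
          simp at h2
      · exact Set.toFinite _
    have hmemN : (H.deleteEdges {s(u,x)}).edgeSet.ncard ∈ N :=
      ⟨_, le_trans (deleteEdges_le _) hle, hconn', rfl⟩
    have := Nat.sInf_le hmemN
    omega

lemma finite_simpleGraph [Finite V] : Finite (SimpleGraph V) :=
  Finite.of_injective (fun G => G.Adj) (fun a b hab => SimpleGraph.ext hab)

lemma exists_isMST [Finite V] {G : SimpleGraph V} (hG : G.Connected) (w : Sym2 V → ℝ) :
    ∃ T, IsSpanningTree G T ∧ ∀ T', IsSpanningTree G T' → treeWeight w T ≤ treeWeight w T' := by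
  have : Finite (SimpleGraph V) := finite_simpleGraph
  obtain ⟨T₀, hT₀⟩ := exists_spanning_tree hG
  set s : Finset (SimpleGraph V) := (Set.toFinite {T | IsSpanningTree G T}).toFinset with hs
  have hmem : ∀ T, T ∈ s ↔ IsSpanningTree G T := by
    intro T; rw [hs, Set.Finite.mem_toFinset]; rfl
  obtain ⟨T, hT, hmin⟩ := s.exists_min_image (treeWeight w) ⟨T₀, (hmem T₀).2 hT₀⟩
  exact ⟨T, (hmem T).1 hT, fun T' h' => hmin T' ((hmem T').2 h')⟩

lemma swap_spanning [Finite V] {G T : SimpleGraph V} (hT : IsSpanningTree G T)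
    {r : Sym2 V} (hr : r ∈ T.edgeSet) {a b : V} (hab : G.Adj a b)
    (hsep : ¬ (T.deleteEdges {r}).Reachable a b) (w : Sym2 V → ℝ) :
    IsSpanningTree G (SimpleGraph.fromEdgeSet (insert s(a,b) (T.edgeSet \ {r}))) ∧
      (SimpleGraph.fromEdgeSet (insert s(a,b) (T.edgeSet \ {r}))).edgeSet
        = insert s(a,b) (T.edgeSet \ {r}) ∧
      treeWeight w (SimpleGraph.fromEdgeSet (insert s(a,b) (T.edgeSet \ {r})))
        = treeWeight w T - w r + w s(a,b) := by
  induction r using Sym2.ind with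
  | _ x y =>
  set g : Sym2 V := s(a, b) with hg
  set E' : Set (Sym2 V) := insert g (T.edgeSet \ {s(x,y)}) with hE'
  have hEG : E' ⊆ G.edgeSet := by
    rw [hE']
    apply Set.insert_subset ((SimpleGraph.mem_edgeSet G).2 hab)
    exact Set.diff_subset.trans (SimpleGraph.edgeSet_mono hT.1)
  have hE : (SimpleGraph.fromEdgeSet E').edgeSet = E' := by
    rw [SimpleGraph.edgeSet_fromEdgeSet]
    rw [sdiff_eq_left]
    rw [Set.disjoint_left]
    intro e he hdiag
    exact SimpleGraph.not_isDiag_of_mem_edgeSet G (hEG he) hdiag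
  have hgT : g ∉ T.edgeSet \ {s(x,y)} := by
    intro hmem
    apply hsep
    have : (T.deleteEdges {s(x,y)}).Adj a b := by
      rw [deleteEdges_adj]
      exact ⟨(SimpleGraph.mem_edgeSet T).1 hmem.1, hmem.2⟩
    exact this.reachable
  have hle' : SimpleGraph.fromEdgeSet E' ≤ G := by
    rw [← SimpleGraph.edgeSet_subset_edgeSet, hE]; exact hEG
  have hdle : T.deleteEdges {s(x,y)} ≤ SimpleGraph.fromEdgeSet E' := by
    rw [← SimpleGraph.edgeSet_subset_edgeSet, hE, edgeSet_deleteEdges]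
    exact Set.subset_insert _ _
  have hTc := hT.2.isConnected
  have sides : ∀ v, (T.deleteEdges {s(x,y)}).Reachable v x ∨
      (T.deleteEdges {s(x,y)}).Reachable v y := by
    intro v
    obtain ⟨p⟩ := hTc.preconnected x v
    exact side_step p (Or.inl (SimpleGraph.Reachable.refl x))
  have hadj_ab : (SimpleGraph.fromEdgeSet E').Adj a b := by
    rw [SimpleGraph.fromEdgeSet_adj]
    exact ⟨Set.mem_insert _ _, hab.ne⟩
  have hxy_to_a : (SimpleGraph.fromEdgeSet E').Reachable x a ∧
      (SimpleGraph.fromEdgeSet E').Reachable y a := by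
    rcases sides a with h1 | h1 <;> rcases sides b with h2 | h2
    · exact absurd (h1.trans h2.symm) hsep
    · exact ⟨(h1.mono hdle).symm, ((h2.mono hdle).symm.trans hadj_ab.symm.reachable)⟩
    · exact ⟨((h2.mono hdle).symm.trans hadj_ab.symm.reachable), (h1.mono hdle).symm⟩
    · exact absurd (h1.trans h2.symm) hsep
  have main : ∀ v, (SimpleGraph.fromEdgeSet E').Reachable v a := by
    intro v
    rcases sides v with h1 | h1
    · exact (h1.mono hdle).trans hxy_to_a.1
    · exact (h1.mono hdle).trans hxy_to_a.2
  have hconn : (SimpleGraph.fromEdgeSet E').Connected := by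
    have : Nonempty V := hTc.nonempty
    exact SimpleGraph.Connected.mk (fun u v => (main u).trans (main v).symm)
  have hacyc : (SimpleGraph.fromEdgeSet E').IsAcyclic := by
    intro u c hc
    by_cases hgc : g ∈ c.edges
    · have hreach := ((adj_and_reachable_delete_edges_iff_exists_cycle
        (G := SimpleGraph.fromEdgeSet E')).2 ⟨u, c, hc, hgc⟩).2
      have hle2 : (SimpleGraph.fromEdgeSet E') \ SimpleGraph.fromEdgeSet {g} ≤
          T.deleteEdges {s(x,y)} := by
        intro u' v' huv
        rw [SimpleGraph.sdiff_adj, SimpleGraph.fromEdgeSet_adj, SimpleGraph.fromEdgeSet_adj] at huv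
        obtain ⟨⟨hmem, hne⟩, hnot⟩ := huv
        have hneg : s(u', v') ≠ g := by
          intro hEq
          exact hnot ⟨by rw [hEq]; exact rfl, hne⟩
        have : s(u', v') ∈ T.edgeSet \ {s(x,y)} := by
          rcases Set.mem_insert_iff.1 hmem with h' | h'
          · exact absurd h' hneg
          · exact h'
        rw [deleteEdges_adj]
        exact ⟨(SimpleGraph.mem_edgeSet T).1 this.1, this.2⟩
      exact hsep (hreach.mono hle2)
    · have hsub : ∀ e ∈ c.edges, e ∈ T.edgeSet := by
        intro e he
        have hmem := c.edges_subset_edgeSet he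
        rw [hE] at hmem
        rcases Set.mem_insert_iff.1 hmem with h' | h'
        · exact absurd (h' ▸ he) hgc
        · exact h'.1
      exact hT.2.IsAcyclic (c.transfer T hsub) (hc.transfer hsub)
  refine ⟨⟨hle', hconn, hacyc⟩, hE, ?_⟩
  have hfin : ((SimpleGraph.fromEdgeSet E').edgeSet).toFinite.toFinset =
      insert g ((T.edgeSet.toFinite.toFinset).erase s(x,y)) := by
    ext e
    rw [Set.Finite.mem_toFinset, hE]
    simp only [Set.Finite.mem_toFinset, Finset.mem_insert, Finset.mem_erase, hE, hE',
      Set.mem_insert_iff, Set.mem_diff, Set.mem_singleton_iff]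
    tauto
  have hnotmem : g ∉ (T.edgeSet.toFinite.toFinset).erase s(x,y) := by
    rw [Finset.mem_erase, Set.Finite.mem_toFinset]
    intro hmem
    exact hgT ⟨hmem.2, hmem.1⟩
  have hrmem : s(x,y) ∈ T.edgeSet.toFinite.toFinset := (Set.Finite.mem_toFinset _).2 hr
  show (∑ e ∈ ((SimpleGraph.fromEdgeSet E').edgeSet).toFinite.toFinset, w e) = _
  rw [hfin, Finset.sum_insert hnotmem, Finset.sum_erase_eq_sub hrmem]
  have hTW : (∑ e ∈ T.edgeSet.toFinite.toFinset, w e) = treeWeight w T := rfl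
  rw [hTW]
  ring

lemma not_reachable_delete_of_mem_path {T : SimpleGraph V} (hT : T.IsTree)
    {a b : V} {p : T.Walk a b} (hp : p.IsPath) {f : Sym2 V} (hf : f ∈ p.edges) :
    ¬ (T.deleteEdges {f}).Reachable a b := by
  rintro ⟨q⟩
  set q₁ : (T.deleteEdges {f}).Walk a b := (q.toPath : (T.deleteEdges {f}).Path a b).1 with hq₁
  have hq₁p : q₁.IsPath := (q.toPath : (T.deleteEdges {f}).Path a b).2
  have hsub : ∀ e ∈ q₁.edges, e ∈ T.edgeSet := by
    intro e he
    have := SimpleGraph.Walk.edges_subset_edgeSet _ he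
    rw [edgeSet_deleteEdges] at this
    exact this.1
  set q₂ : T.Walk a b := q₁.transfer T hsub with hq₂
  have hq₂p : q₂.IsPath := hq₁p.transfer hsub
  have hEq := hT.IsAcyclic.path_unique ⟨q₂, hq₂p⟩ ⟨p, hp⟩
  have hedges : q₂.edges = p.edges := by
    have := congrArg (fun P : T.Path a b => (P : T.Walk a b).edges) hEq
    simpa using this
  have hf' : f ∈ q₂.edges := by rw [hedges]; exact hf
  rw [hq₂, SimpleGraph.Walk.edges_transfer] at hf'
  have := SimpleGraph.Walk.edges_subset_edgeSet _ hf'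
  rw [edgeSet_deleteEdges] at this
  exact this.2 rfl

lemma exists_crossing {H : SimpleGraph V} (P : V → Prop) :
    ∀ {a b : V} (p : H.Walk a b), P a → ¬ P b →
      ∃ x y, H.Adj x y ∧ s(x,y) ∈ p.edges ∧ P x ∧ ¬ P y := by
  intro a b p
  induction p with
  | nil => intro ha hb; exact absurd ha hb
  | @cons u c v h q ih =>
    intro ha hb
    by_cases hc : P c
    · obtain ⟨x, y, hxy, hmem, hPx, hPy⟩ := ih hc hb
      exact ⟨x, y, hxy, by simp [hmem], hPx, hPy⟩
    · exact ⟨u, c, h, by simp, ha, hc⟩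

lemma key_lemma [Finite V] {G : SimpleGraph V} (hG : G.Connected) (w w' : Sym2 V → ℝ)
    (S : Set (Sym2 V))
    (h : ∀ e ∈ S, {f ∈ G.edgeSet | w' f ≤ w' e} ⊆ {f ∈ G.edgeSet | w f ≤ w e})
    {T' : SimpleGraph V} (hT' : IsMST G w' T') :
    ∃ T, IsMST G w T ∧ T.edgeSet ∩ S ⊆ T'.edgeSet ∩ S := by
  set N : Set ℕ := {k | ∃ T, IsMST G w T ∧ k = ((T.edgeSet ∩ S) \ T'.edgeSet).ncard} with hN
  have hNe : N.Nonempty := by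
    obtain ⟨T₀, h1, h2⟩ := exists_isMST hG w
    exact ⟨_, T₀, ⟨h1, h2⟩, rfl⟩
  obtain ⟨T, hTmst, hk⟩ := Nat.sInf_mem hNe
  refine ⟨T, hTmst, ?_⟩
  rintro e ⟨heT, heS⟩
  refine ⟨?_, heS⟩
  by_contra heT'
  induction e using Sym2.ind with
  | _ a b =>
  have hTG := hTmst.1.1
  have haT : T.Adj a b := (SimpleGraph.mem_edgeSet T).1 heT
  have hGab : G.Adj a b := hTG haT
  obtain ⟨q⟩ := hT'.1.2.isConnected.preconnected a b
  have hq₁ : (q.toPath : T'.Walk a b).IsPath := q.toPath.2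
  set P : V → Prop := fun v => (T.deleteEdges {s(a,b)}).Reachable a v with hP
  have hPa : P a := SimpleGraph.Reachable.refl a
  have hPb : ¬ P b := by
    have hbr := isAcyclic_iff_forall_adj_isBridge.1 hTmst.1.2.IsAcyclic haT
    rw [isBridge_iff] at hbr
    exact fun hreach => hbr hreach
  obtain ⟨x, y, hxyT', hfq, hPx, hPy⟩ :=
    exists_crossing P (q.toPath : T'.Walk a b) hPa hPb
  have hfT' : s(x,y) ∈ T'.edgeSet := hxyT'
  have hGxy : G.Adj x y := hT'.1.1 hxyT'
  have hsep' : ¬ (T'.deleteEdges {s(x,y)}).Reachable a b :=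
    not_reachable_delete_of_mem_path hT'.1.2 hq₁ hfq
  obtain ⟨hsp2, -, hw2⟩ := swap_spanning hT'.1 hfT' hGab hsep' w'
  have hw'le : w' s(x,y) ≤ w' s(a,b) := by
    have := hT'.2 _ hsp2
    rw [hw2] at this
    linarith
  have hwle : w s(x,y) ≤ w s(a,b) :=
    (h s(a,b) heS ⟨(SimpleGraph.mem_edgeSet G).2 hGxy, hw'le⟩).2
  have hsep2 : ¬ (T.deleteEdges {s(a,b)}).Reachable x y := fun hr => hPy (hPx.trans hr)
  obtain ⟨hsp3, hE3, hw3⟩ := swap_spanning hTmst.1 heT hGxy hsep2 w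
  set T₃ := SimpleGraph.fromEdgeSet (insert s(x,y) (T.edgeSet \ {s(a,b)})) with hT₃
  have hge : treeWeight w T ≤ treeWeight w T₃ := hTmst.2 _ hsp3
  have hW3 : treeWeight w T₃ = treeWeight w T := by
    rw [hw3] at hge ⊢
    linarith
  have hT₃mst : IsMST G w T₃ := by
    refine ⟨hsp3, fun T'' h'' => ?_⟩
    rw [hW3]
    exact hTmst.2 T'' h''
  have hsubset : (T₃.edgeSet ∩ S) \ T'.edgeSet ⊆ ((T.edgeSet ∩ S) \ T'.edgeSet) \ {s(a,b)} := by
    rintro g ⟨⟨hgT₃, hgS⟩, hgT'⟩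
    rw [hE3] at hgT₃
    rcases Set.mem_insert_iff.1 hgT₃ with rfl | hg
    · exact absurd hfT' hgT'
    · exact ⟨⟨⟨hg.1, hgS⟩, hgT'⟩, hg.2⟩
  have hlt : ((T₃.edgeSet ∩ S) \ T'.edgeSet).ncard < ((T.edgeSet ∩ S) \ T'.edgeSet).ncard :=
    lt_of_le_of_lt (Set.ncard_le_ncard hsubset (Set.toFinite _))
      (Set.ncard_diff_singleton_lt_of_mem ⟨⟨heT, heS⟩, heT'⟩ (Set.toFinite _))
  have hle := Nat.sInf_le (show ((T₃.edgeSet ∩ S) \ T'.edgeSet).ncard ∈ N from ⟨T₃, hT₃mst, rfl⟩)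
  omega

end MSTAux

theorem coverage_mono_of_sm_eq_subset {V : Type*} [Finite V] (G : SimpleGraph V)
    (hG : G.Connected) (w w' : Sym2 V → ℝ) (S : Set (Sym2 V)) (hS : S ⊆ G.edgeSet)
    (h : ∀ e ∈ S, {f ∈ G.edgeSet | w' f ≤ w' e} ⊆ {f ∈ G.edgeSet | w f ≤ w e}) :
    coverage G w S ≤ coverage G w' S := by
  have hMe' : {n | ∃ T, IsMST G w' T ∧ n = Nat.card ↥(T.edgeSet ∩ S)}.Nonempty := by
    obtain ⟨T₀, h1, h2⟩ := exists_isMST hG w'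
    exact ⟨_, T₀, ⟨h1, h2⟩, rfl⟩
  obtain ⟨T', hT', hcard'⟩ := Nat.sInf_mem hMe'
  obtain ⟨T, hTmst, hsub⟩ := key_lemma hG w w' S h hT'
  have h1 : coverage G w S ≤ Nat.card ↥(T.edgeSet ∩ S) := Nat.sInf_le ⟨T, hTmst, rfl⟩
  have h2 : Nat.card ↥(T.edgeSet ∩ S) ≤ Nat.card ↥(T'.edgeSet ∩ S) := by
    rw [Nat.card_coe_set_eq, Nat.card_coe_set_eq]
    exact Set.ncard_le_ncard hsub (Set.toFinite _)
  have h3 : coverage G w' S = Nat.card ↥(T'.edgeSet ∩ S) := hcard'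
  omega
end

section
/- Let G = (V,E) be a finite connected graph with edge-weight function w : E → ℝ. Then the coverage function is supermodular: for any edge sets F, F' ⊆ E, coverage(F,(G,w)) + coverage(F',(G,w)) ≤ coverage(F ∪ F',(G,w)) + coverage(F ∩ F',(G,w)). -/
open Classical

open SimpleGraph

section MSTAux


variable {V : Type*}

/-- After deleting an edge whose endpoints remain reachable, reachability is preserved. -/
lemma mst_reach_delete {H : SimpleGraph V} {u v : V}
    (huv : (H \ fromEdgeSet {s(u,v)}).Reachable u v) :
    ∀ {x y : V}, H.Walk x y → (H \ fromEdgeSet {s(u,v)}).Reachable x y := by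
  intro x y p
  induction p with
  | nil => exact Reachable.refl _
  | @cons a b c h q ih =>
    refine Reachable.trans ?_ ih
    by_cases hab : s(a,b) = s(u,v)
    · rw [Sym2.eq_iff] at hab
      rcases hab with ⟨rfl, rfl⟩ | ⟨rfl, rfl⟩
      · exact huv
      · exact huv.symm
    · exact Adj.reachable (by rw [sdiff_adj]; exact ⟨h, by simp [fromEdgeSet_adj, hab]⟩)

/-- Every vertex with a walk to `z` is, after deleting `s(u,v)`, reachable
to `u`, to `v`, or to `z`. -/
lemma mst_side_of_walk_aux {H : SimpleGraph V} (u v : V) :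
    ∀ {x z : V}, H.Walk x z →
      (H \ fromEdgeSet {s(u,v)}).Reachable x u ∨ (H \ fromEdgeSet {s(u,v)}).Reachable x v ∨
      (H \ fromEdgeSet {s(u,v)}).Reachable x z := by
  intro x z p
  induction p with
  | nil => exact Or.inr (Or.inr (Reachable.refl _))
  | @cons a b c h q ih =>
    by_cases hab : s(a,b) = s(u,v)
    · rw [Sym2.eq_iff] at hab
      rcases hab with ⟨rfl, rfl⟩ | ⟨rfl, rfl⟩
      · exact Or.inl (Reachable.refl _)
      · exact Or.inr (Or.inl (Reachable.refl _))
    · have hadj : (H \ fromEdgeSet {s(u,v)}).Adj a b := by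
        rw [sdiff_adj]; exact ⟨h, by simp [fromEdgeSet_adj, hab]⟩
      rcases ih with h' | h' | h'
      · exact Or.inl (hadj.reachable.trans h')
      · exact Or.inr (Or.inl (hadj.reachable.trans h'))
      · exact Or.inr (Or.inr (hadj.reachable.trans h'))

lemma mst_side_of_walk {H : SimpleGraph V} {u v x : V} (p : H.Walk x u) :
    (H \ fromEdgeSet {s(u,v)}).Reachable x u ∨ (H \ fromEdgeSet {s(u,v)}).Reachable x v := by
  rcases mst_side_of_walk_aux u v p with h | h | h
  · exact Or.inl h
  · exact Or.inr h
  · exact Or.inl h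

/-- A walk from a `P`-vertex to a non-`P`-vertex crosses at some edge. -/
lemma mst_exists_crossing {H : SimpleGraph V} (P : V → Prop) :
    ∀ {a b : V} (p : H.Walk a b), P a → ¬ P b →
      ∃ x y, s(x,y) ∈ p.edges ∧ P x ∧ ¬ P y := by
  intro a b p
  induction p with
  | nil => intro h h'; exact absurd h h'
  | @cons a c b h q ih =>
    intro ha hb
    by_cases hc : P c
    · obtain ⟨x, y, hmem, hx, hy⟩ := ih hc hb
      exact ⟨x, y, List.mem_cons_of_mem _ hmem, hx, hy⟩
    · exact ⟨a, c, List.mem_cons_self, ha, hc⟩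

/-- In an acyclic graph, removing any edge of a path disconnects its endpoints. -/
lemma mst_not_reachable_delete_of_isPath {H : SimpleGraph V} (hH : H.IsAcyclic)
    {u v x y : V} {p : H.Walk u v} (hp : p.IsPath) (hf : s(x,y) ∈ p.edges) :
    ¬ (H \ fromEdgeSet {s(x,y)}).Reachable u v := by
  induction p with
  | nil => simp at hf
  | @cons a c b h q ih =>
    rw [Walk.edges_cons, List.mem_cons] at hf
    have hq : q.IsPath := hp.of_cons
    have hnodup : s(a,c) ∉ q.edges := by
      have := hp.isTrail.edges_nodup
      rw [Walk.edges_cons] at this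
      exact (List.nodup_cons.mp this).1
    rcases hf with hf | hf
    · -- head edge is the deleted one
      have hbr : ¬ (H \ fromEdgeSet {s(x,y)}).Reachable a c := by
        have hbridge : H.IsBridge s(a,c) := (isAcyclic_iff_forall_edge_isBridge.mp hH) h
        rw [isBridge_iff] at hbridge
        rw [hf]
        exact hbridge
      intro hr
      have hcv : (H \ fromEdgeSet {s(x,y)}).Reachable c b := by
        obtain ⟨q'⟩ : Nonempty ((H \ fromEdgeSet {s(x,y)}).Walk c b) := by
          refine ⟨q.transfer _ ?_⟩
          intro e he
          rw [edgeSet_sdiff, edgeSet_fromEdgeSet, edgeSet_sdiff_sdiff_isDiag]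
          refine ⟨q.edges_subset_edgeSet he, ?_⟩
          simp only [Set.mem_singleton_iff]
          rintro rfl
          rw [hf] at he
          exact hnodup he
        exact ⟨q'⟩
      exact hbr (hr.trans hcv.symm)
    · -- edge in the tail
      intro hr
      have hac : s(a,c) ≠ s(x,y) := by
        intro h'; rw [h'] at hnodup; exact hnodup hf
      have hadj : (H \ fromEdgeSet {s(x,y)}).Adj a c := by
        rw [sdiff_adj]; exact ⟨h, by simp [fromEdgeSet_adj, hac]⟩
      exact ih hq hf (hadj.reachable.symm.trans hr)
/-- edgeSet of edge deletion. -/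
lemma mst_edgeSet_delete (H : SimpleGraph V) (e : Sym2 V) :
    (H \ fromEdgeSet {e}).edgeSet = H.edgeSet \ {e} := by
  rw [edgeSet_sdiff, edgeSet_fromEdgeSet, edgeSet_sdiff_sdiff_isDiag]

/-- Every connected graph on a finite vertex set has a spanning tree. -/
lemma mst_exists_spanning_tree [Finite V] :
    ∀ (n : ℕ) (H : SimpleGraph V), H.edgeSet.ncard = n → H.Connected →
      ∃ T, T ≤ H ∧ T.IsTree := by
  intro n
  induction n using Nat.strong_induction_on with
  | _ n ih =>
    intro H hn hH
    by_cases ha : H.IsAcyclic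
    · exact ⟨H, le_rfl, ⟨hH, ha⟩⟩
    · rw [isAcyclic_iff_forall_edge_isBridge] at ha
      push_neg at ha
      obtain ⟨e, he, hb⟩ := ha
      induction e using Sym2.ind with
      | _ u v =>
        have hadj : H.Adj u v := he
        have hr : (H \ fromEdgeSet {s(u,v)}).Reachable u v := by
          rw [isBridge_iff] at hb
          push_neg at hb
          exact hb
        have hconn : (H \ fromEdgeSet {s(u,v)}).Connected := by
          have : Nonempty V := hH.nonempty
          refine Connected.mk ?_
          intro x y
          obtain ⟨p⟩ := hH.preconnected x y
          exact mst_reach_delete hr p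
        have hcard : (H \ fromEdgeSet {s(u,v)}).edgeSet.ncard < n := by
          rw [mst_edgeSet_delete, ← hn]
          exact Set.ncard_diff_singleton_lt_of_mem he (Set.toFinite _)
        obtain ⟨T, hT1, hT2⟩ := ih _ hcard _ rfl hconn
        exact ⟨T, hT1.trans sdiff_le, hT2⟩

/-- Edge count of a tree, ncard form. -/
lemma mst_tree_card [Finite V] {T : SimpleGraph V} (h : T.IsTree) :
    T.edgeSet.ncard + 1 = Nat.card V := by
  have := Fintype.ofFinite V
  classical
  have h1 := h.card_edgeFinset
  have h2 : T.edgeSet.ncard = T.edgeFinset.card := by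
    rw [Set.ncard_eq_toFinset_card']
    congr
  rw [Nat.card_eq_fintype_card, ← h1, h2]

/-- Converse: connected graph with `|V| - 1` edges is a tree. -/
lemma mst_isTree_of_card [Finite V] {H : SimpleGraph V} (hc : H.Connected)
    (hcard : H.edgeSet.ncard + 1 = Nat.card V) : H.IsTree := by
  obtain ⟨T, hTle, hT⟩ := mst_exists_spanning_tree H.edgeSet.ncard H rfl hc
  have hsub : T.edgeSet ⊆ H.edgeSet := edgeSet_subset_edgeSet.mpr hTle
  have hcards : H.edgeSet.ncard ≤ T.edgeSet.ncard := by
    have := mst_tree_card hT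
    omega
  have : T.edgeSet = H.edgeSet :=
    Set.eq_of_subset_of_ncard_le hsub hcards (Set.toFinite _)
  rwa [edgeSet_inj.mp this] at hT
/-- The edge set of the swap graph. -/
lemma mst_edgeSet_swap {T : SimpleGraph V} {e f : Sym2 V} (hf : ¬ f.IsDiag) :
    (fromEdgeSet ((T.edgeSet \ {e}) ∪ {f})).edgeSet = (T.edgeSet \ {e}) ∪ {f} := by
  rw [edgeSet_fromEdgeSet]
  ext x
  simp only [Set.mem_diff, Set.mem_union, Set.mem_singleton_iff, Set.mem_setOf_eq]
  refine ⟨fun h => h.1, fun h => ⟨h, ?_⟩⟩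
  rcases h with ⟨hx, _⟩ | rfl
  · exact T.not_isDiag_of_mem_edgeSet hx
  · exact hf

/-- Exchange lemma for spanning trees. -/
lemma mst_exchange [Finite V] {G T₁ T₂ : SimpleGraph V}
    (h₁ : IsSpanningTree G T₁) (h₂ : IsSpanningTree G T₂)
    {e : Sym2 V} (he₁ : e ∈ T₁.edgeSet) (he₂ : e ∉ T₂.edgeSet) :
    ∃ f ∈ T₂.edgeSet, f ∉ T₁.edgeSet ∧
      IsSpanningTree G (fromEdgeSet ((T₁.edgeSet \ {e}) ∪ {f})) ∧
      IsSpanningTree G (fromEdgeSet ((T₂.edgeSet \ {f}) ∪ {e})) := by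
  have hV : Nonempty V := h₁.2.isConnected.nonempty
  induction e using Sym2.ind with
  | _ u v =>
    have huv : T₁.Adj u v := he₁
    set D := T₁ \ fromEdgeSet {s(u,v)} with hD
    -- the two sides of the cut
    have hbr : ¬ D.Reachable u v := by
      have hbridge := (isAcyclic_iff_forall_edge_isBridge.mp h₁.2.IsAcyclic) he₁
      rw [isBridge_iff] at hbridge
      exact hbridge
    have hsides : ∀ x : V, D.Reachable x u ∨ D.Reachable x v := fun x => by
      obtain ⟨p⟩ := h₁.2.isConnected.preconnected x u
      exact mst_side_of_walk p
    -- a path from u to v in T₂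
    obtain ⟨q⟩ := h₂.2.isConnected.preconnected u v
    set p : T₂.Walk u v := (q.toPath : T₂.Walk u v) with hpdef
    have hp : p.IsPath := q.toPath.2
    -- crossing edge
    obtain ⟨x₀, y₀, hmem, hx₀, hy₀'⟩ :=
      mst_exists_crossing (fun x => D.Reachable u x) p (Reachable.refl u) (fun h => hbr h)
    have hf₂ : s(x₀,y₀) ∈ T₂.edgeSet := p.edges_subset_edgeSet hmem
    have hxy : x₀ ≠ y₀ := (Walk.adj_of_mem_edges p hmem).ne
    have hy₀ : D.Reachable y₀ v := by
      rcases hsides y₀ with h | h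
      · exact absurd h.symm hy₀'
      · exact h
    have hfne : s(x₀,y₀) ≠ s(u,v) := fun h => he₂ (h ▸ hf₂)
    have hf₁ : s(x₀,y₀) ∉ T₁.edgeSet := by
      intro hmem₁
      have : D.Adj x₀ y₀ := by
        rw [hD, sdiff_adj]
        exact ⟨hmem₁, by simp [fromEdgeSet_adj, hfne]⟩
      exact hy₀' (hx₀.trans this.reachable)
    have hfd : ¬ (s(x₀,y₀) : Sym2 V).IsDiag := T₂.not_isDiag_of_mem_edgeSet hf₂
    have hed : ¬ (s(u,v) : Sym2 V).IsDiag := T₁.not_isDiag_of_mem_edgeSet he₁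
    -- the swapped graphs
    set A₁ : Set (Sym2 V) := (T₁.edgeSet \ {s(u,v)}) ∪ {s(x₀,y₀)} with hA₁
    set A₂ : Set (Sym2 V) := (T₂.edgeSet \ {s(x₀,y₀)}) ∪ {s(u,v)} with hA₂
    have hes₁ : (fromEdgeSet A₁).edgeSet = A₁ := mst_edgeSet_swap hfd
    have hes₂ : (fromEdgeSet A₂).edgeSet = A₂ := mst_edgeSet_swap hed
    have hle₁ : fromEdgeSet A₁ ≤ G := by
      rw [← edgeSet_subset_edgeSet, hes₁, hA₁]
      rintro x (⟨hx, _⟩ | rfl)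
      · exact edgeSet_subset_edgeSet.mpr h₁.1 hx
      · exact edgeSet_subset_edgeSet.mpr h₂.1 hf₂
    have hle₂ : fromEdgeSet A₂ ≤ G := by
      rw [← edgeSet_subset_edgeSet, hes₂, hA₂]
      rintro x (⟨hx, _⟩ | rfl)
      · exact edgeSet_subset_edgeSet.mpr h₂.1 hx
      · exact edgeSet_subset_edgeSet.mpr h₁.1 he₁
    -- D ≤ fromEdgeSet A₁
    have hDle : D ≤ fromEdgeSet A₁ := by
      rw [← edgeSet_subset_edgeSet, hes₁, mst_edgeSet_delete]
      exact Set.subset_union_left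
    have hadj₁ : (fromEdgeSet A₁).Adj x₀ y₀ := by
      rw [fromEdgeSet_adj]
      exact ⟨Or.inr rfl, hxy⟩
    -- connectivity of fromEdgeSet A₁
    have hconn₁ : (fromEdgeSet A₁).Connected := by
      refine Connected.mk fun x y => ?_
      have key : ∀ z : V, (fromEdgeSet A₁).Reachable z u := by
        intro z
        rcases hsides z with h | h
        · exact h.mono hDle
        · refine (h.mono hDle).trans ?_
          exact ((hy₀.mono hDle).symm.trans hadj₁.symm.reachable).trans (hx₀.mono hDle).symm
      exact (key x).trans (key y).symm
    -- connectivity of fromEdgeSet A₂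
    have hsides₂ : ∀ x : V, (T₂ \ fromEdgeSet {s(x₀,y₀)}).Reachable x x₀ ∨
        (T₂ \ fromEdgeSet {s(x₀,y₀)}).Reachable x y₀ := fun x => by
      obtain ⟨p'⟩ := h₂.2.isConnected.preconnected x x₀
      exact mst_side_of_walk p'
    have hbr₂ : ¬ (T₂ \ fromEdgeSet {s(x₀,y₀)}).Reachable u v :=
      mst_not_reachable_delete_of_isPath h₂.2.IsAcyclic hp hmem
    have hD₂le : (T₂ \ fromEdgeSet {s(x₀,y₀)}) ≤ fromEdgeSet A₂ := by
      rw [← edgeSet_subset_edgeSet, hes₂, mst_edgeSet_delete]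
      exact Set.subset_union_left
    have hadj₂ : (fromEdgeSet A₂).Adj u v := by
      rw [fromEdgeSet_adj]
      exact ⟨Or.inr rfl, huv.ne⟩
    have hconn₂ : (fromEdgeSet A₂).Connected := by
      set D₂ := T₂ \ fromEdgeSet {s(x₀,y₀)} with hD₂
      -- u and v are on opposite sides of the cut x₀ / y₀ in D₂
      have hopp : (D₂.Reachable u x₀ ∧ D₂.Reachable v y₀) ∨
          (D₂.Reachable u y₀ ∧ D₂.Reachable v x₀) := by
        rcases hsides₂ u with hu | hu <;> rcases hsides₂ v with hv | hv
        · exact absurd (hu.trans hv.symm) hbr₂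
        · exact Or.inl ⟨hu, hv⟩
        · exact Or.inr ⟨hu, hv⟩
        · exact absurd (hu.trans hv.symm) hbr₂
      refine Connected.mk fun x y => ?_
      have key : ∀ z : V, (fromEdgeSet A₂).Reachable z x₀ := by
        intro z
        have hbridgeuv : (fromEdgeSet A₂).Reachable y₀ x₀ := by
          rcases hopp with ⟨h1, h2⟩ | ⟨h1, h2⟩
          · exact ((h2.mono hD₂le).symm.trans hadj₂.symm.reachable).trans (h1.mono hD₂le)
          · exact ((h1.mono hD₂le).symm.trans hadj₂.reachable).trans (h2.mono hD₂le)
        rcases hsides₂ z with h | h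
        · exact h.mono hD₂le
        · exact (h.mono hD₂le).trans hbridgeuv
      exact (key x).trans (key y).symm
    -- cardinalities
    have hcard₁ : A₁.ncard = T₁.edgeSet.ncard := by
      rw [hA₁, Set.union_singleton,
        Set.ncard_insert_of_notMem (fun h => hf₁ h.1) (Set.toFinite _),
        Set.ncard_diff_singleton_add_one he₁ (Set.toFinite _)]
    have hcard₂ : A₂.ncard = T₂.edgeSet.ncard := by
      rw [hA₂, Set.union_singleton,
        Set.ncard_insert_of_notMem (fun h => he₂ h.1) (Set.toFinite _),
        Set.ncard_diff_singleton_add_one hf₂ (Set.toFinite _)]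
    refine ⟨s(x₀,y₀), hf₂, hf₁, ⟨hle₁, mst_isTree_of_card hconn₁ ?_⟩,
      ⟨hle₂, mst_isTree_of_card hconn₂ ?_⟩⟩
    · rw [hes₁, hcard₁]
      exact mst_tree_card h₁.2
    · rw [hes₂, hcard₂]
      exact mst_tree_card h₂.2
/-- Weight of a swapped tree. -/
lemma mst_treeWeight_swap [Finite V] (w : Sym2 V → ℝ) {T : SimpleGraph V} {e f : Sym2 V}
    (he : e ∈ T.edgeSet) (hf : f ∉ T.edgeSet) (hfd : ¬ f.IsDiag) :
    treeWeight w (fromEdgeSet ((T.edgeSet \ {e}) ∪ {f})) + w e = treeWeight w T + w f := by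
  classical
  unfold treeWeight
  have hset : (fromEdgeSet ((T.edgeSet \ {e}) ∪ {f})).edgeSet.toFinite.toFinset
      = insert f (T.edgeSet.toFinite.toFinset.erase e) := by
    ext x
    simp only [Set.Finite.mem_toFinset, mst_edgeSet_swap hfd, Set.mem_union, Set.mem_diff,
      Set.mem_singleton_iff, Finset.mem_insert, Finset.mem_erase]
    tauto
  rw [hset, Finset.sum_insert (by simp [Set.Finite.mem_toFinset, hf])]
  have herase : ∑ x ∈ T.edgeSet.toFinite.toFinset.erase e, w x + w e
      = ∑ x ∈ T.edgeSet.toFinite.toFinset, w x :=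
    Finset.sum_erase_add _ _ (by simp [Set.Finite.mem_toFinset, he])
  linarith

/-- Existence of a minimum spanning tree. -/
lemma mst_exists_isMST [Finite V] (G : SimpleGraph V) (hG : G.Connected) (w : Sym2 V → ℝ) :
    ∃ T, IsMST G w T := by
  classical
  have hfin : {T : SimpleGraph V | IsSpanningTree G T}.Finite := Set.toFinite _
  have hne : hfin.toFinset.Nonempty := by
    obtain ⟨T, hT1, hT2⟩ := mst_exists_spanning_tree G.edgeSet.ncard G rfl hG
    exact ⟨T, by simp [Set.Finite.mem_toFinset, IsSpanningTree, hT1, hT2]⟩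
  obtain ⟨T, hT, hmin⟩ := hfin.toFinset.exists_min_image (treeWeight w) hne
  rw [Set.Finite.mem_toFinset] at hT
  exact ⟨T, hT, fun T' hT' => hmin T' (by simpa [Set.Finite.mem_toFinset] using hT')⟩

/-- Counting helper: intersection of a swap with a set. -/
lemma mst_ncard_swap_inter {α : Type*} [Finite α] {A : Set α} {e f : α}
    (he : e ∈ A) (hf : f ∉ A) (S : Set α) :
    (((A \ {e}) ∪ {f}) ∩ S).ncard + (if e ∈ S then 1 else 0)
      = (A ∩ S).ncard + (if f ∈ S then 1 else 0) := by
  have hsplit : ((A \ {e}) ∪ {f}) ∩ S = ((A ∩ S) \ {e}) ∪ ({f} ∩ S) := by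
    ext x
    simp only [Set.mem_inter_iff, Set.mem_union, Set.mem_diff, Set.mem_singleton_iff]
    tauto
  rw [hsplit]
  by_cases hfS : f ∈ S
  · have : ({f} : Set α) ∩ S = {f} := by
      rw [Set.inter_eq_left]; simpa using hfS
    rw [this, Set.union_singleton, if_pos hfS,
      Set.ncard_insert_of_notMem (fun h => hf h.1.1) (Set.toFinite _)]
    by_cases heS : e ∈ S
    · rw [if_pos heS, Set.ncard_diff_singleton_add_one (Set.mem_inter he heS) (Set.toFinite _)]
    · rw [if_neg heS, Set.diff_singleton_eq_self (fun h => heS h.2)]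
  · have : ({f} : Set α) ∩ S = ∅ := Set.singleton_inter_eq_empty.mpr hfS
    rw [this, Set.union_empty, if_neg hfS]
    by_cases heS : e ∈ S
    · rw [if_pos heS, add_zero, Set.ncard_diff_singleton_add_one (Set.mem_inter he heS) (Set.toFinite _)]
    · rw [if_neg heS, Set.diff_singleton_eq_self (fun h => heS h.2)]

/-- Counting helper: difference of a swap with a set containing `f` but not `e`. -/
lemma mst_ncard_swap_diff {α : Type*} [Finite α] {A C : Set α} {e f : α}
    (he : e ∈ A) (heC : e ∉ C) (hfC : f ∈ C) :
    (((A \ {e}) ∪ {f}) \ C).ncard + 1 = (A \ C).ncard := by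
  have hsplit : ((A \ {e}) ∪ {f}) \ C = (A \ C) \ {e} := by
    ext x
    simp only [Set.mem_union, Set.mem_diff, Set.mem_singleton_iff]
    constructor
    · rintro ⟨⟨hx, hxe⟩ | rfl, hxC⟩
      · exact ⟨⟨hx, hxC⟩, hxe⟩
      · exact absurd hfC hxC
    · rintro ⟨⟨hx, hxC⟩, hxe⟩
      exact ⟨Or.inl ⟨hx, hxe⟩, hxC⟩
  rw [hsplit]
  exact Set.ncard_diff_singleton_add_one ⟨he, heC⟩ (Set.toFinite _)

end MSTAux

/-- Supermodularity of coverage. -/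
theorem coverage_supermodular {V : Type*} [Finite V] (G : SimpleGraph V) (hG : G.Connected)
    (w : Sym2 V → ℝ) (F F' : Set (Sym2 V)) (hF : F ⊆ G.edgeSet) (hF' : F' ⊆ G.edgeSet) :
    coverage G w F + coverage G w F' ≤ coverage G w (F ∪ F') + coverage G w (F ∩ F') := by
  classical
  obtain ⟨T₀, hT₀⟩ := mst_exists_isMST G hG w
  have hcov_le : ∀ (S : Set (Sym2 V)) (T : SimpleGraph V), IsMST G w T →
      coverage G w S ≤ (T.edgeSet ∩ S).ncard :=
    fun S T hT => Nat.sInf_le ⟨T, hT, (Nat.card_coe_set_eq _).symm⟩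
  have hcov_ex : ∀ S : Set (Sym2 V),
      ∃ T, IsMST G w T ∧ (T.edgeSet ∩ S).ncard = coverage G w S := by
    intro S
    have hne : {n | ∃ T, IsMST G w T ∧ n = Nat.card ↥(T.edgeSet ∩ S)}.Nonempty :=
      ⟨_, T₀, hT₀, rfl⟩
    obtain ⟨T, hT, hn⟩ : ∃ T, IsMST G w T ∧
        coverage G w S = Nat.card ↥(T.edgeSet ∩ S) := Nat.sInf_mem hne
    exact ⟨T, hT, by rw [← Nat.card_coe_set_eq, ← hn]⟩
  obtain ⟨T₂, hT₂, hT₂c⟩ := hcov_ex (F ∩ F')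
  set n := Nat.card V with hn
  set 𝒜 : Set (SimpleGraph V) :=
    {T | IsMST G w T ∧ (T.edgeSet ∩ (F ∪ F')).ncard = coverage G w (F ∪ F')} with h𝒜def
  have h𝒜ne : 𝒜.Nonempty := by
    obtain ⟨T, hT, hc⟩ := hcov_ex (F ∪ F'); exact ⟨T, hT, hc⟩
  set g : SimpleGraph V → ℕ :=
    fun T => (T.edgeSet ∩ (F ∩ F')).ncard * (n + 1) + (T.edgeSet \ T₂.edgeSet).ncard with hgdef
  obtain ⟨T₁, hT₁𝒜, hT₁min⟩ : ∃ T ∈ 𝒜, ∀ T' ∈ 𝒜, g T ≤ g T' := by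
    have hne : (g '' 𝒜).Nonempty := h𝒜ne.image g
    obtain ⟨T, hT, hgT⟩ := Nat.sInf_mem hne
    exact ⟨T, hT, fun T' hT' => hgT.le.trans (Nat.sInf_le ⟨T', hT', rfl⟩)⟩
  obtain ⟨hT₁mst, hT₁c⟩ := hT₁𝒜
  -- Claim: the part of T₁ inside F ∩ F' lies in T₂
  have hsub : T₁.edgeSet ∩ (F ∩ F') ⊆ T₂.edgeSet := by
    intro e he
    by_contra he₂
    obtain ⟨heT₁, heFF⟩ := he
    obtain ⟨f, hf₂, hf₁, hs₁, hs₂⟩ := mst_exchange hT₁mst.1 hT₂.1 heT₁ he₂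
    have hw₁ := mst_treeWeight_swap w heT₁ hf₁ (T₂.not_isDiag_of_mem_edgeSet hf₂)
    have hw₂ := mst_treeWeight_swap w hf₂ he₂ (T₁.not_isDiag_of_mem_edgeSet heT₁)
    set B := fromEdgeSet ((T₁.edgeSet \ {e}) ∪ {f}) with hBdef
    set B₂ := fromEdgeSet ((T₂.edgeSet \ {f}) ∪ {e}) with hB₂def
    have h1 : treeWeight w T₁ ≤ treeWeight w B := hT₁mst.2 _ hs₁
    have h2 : treeWeight w T₂ ≤ treeWeight w B₂ := hT₂.2 _ hs₂
    have hweq : treeWeight w B = treeWeight w T₁ := by linarith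
    have hBmst : IsMST G w B := ⟨hs₁, fun T' hT' => hweq ▸ hT₁mst.2 T' hT'⟩
    have hBedge : B.edgeSet = (T₁.edgeSet \ {e}) ∪ {f} :=
      mst_edgeSet_swap (T₂.not_isDiag_of_mem_edgeSet hf₂)
    -- membership of B in 𝒜
    have hcup := mst_ncard_swap_inter heT₁ hf₁ (F ∪ F')
    rw [if_pos (Set.mem_union_left F' heFF.1)] at hcup
    have hBcup_ge : coverage G w (F ∪ F') ≤ (B.edgeSet ∩ (F ∪ F')).ncard := hcov_le _ _ hBmst
    rw [hBedge] at hBcup_ge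
    have hB𝒜 : B ∈ 𝒜 := by
      refine ⟨hBmst, ?_⟩
      rw [hBedge]
      rw [← hT₁c]
      split_ifs at hcup <;> omega
    -- g decreases, contradiction with minimality
    have hmin := hT₁min B hB𝒜
    rw [hgdef] at hmin
    simp only [hBedge] at hmin
    have hcap := mst_ncard_swap_inter heT₁ hf₁ (F ∩ F')
    rw [if_pos heFF] at hcap
    by_cases hfcap : f ∈ F ∩ F'
    · rw [if_pos hfcap] at hcap
      have hdiff := mst_ncard_swap_diff heT₁ he₂ hf₂ (C := T₂.edgeSet)
      have hEq : (((T₁.edgeSet \ {e}) ∪ {f}) ∩ (F ∩ F')).ncard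
          = (T₁.edgeSet ∩ (F ∩ F')).ncard := by omega
      rw [hEq] at hmin
      omega
    · rw [if_neg hfcap] at hcap
      have hband : (((T₁.edgeSet \ {e}) ∪ {f}) \ T₂.edgeSet).ncard ≤ n := by
        have h3 : (((T₁.edgeSet \ {e}) ∪ {f}) \ T₂.edgeSet).ncard
            ≤ (((T₁.edgeSet \ {e}) ∪ {f})).ncard :=
          Set.ncard_le_ncard Set.diff_subset (Set.toFinite _)
        have h4 := mst_tree_card hs₁.2
        rw [hBedge] at h4
        omega
      have hEq : (T₁.edgeSet ∩ (F ∩ F')).ncard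
          = (((T₁.edgeSet \ {e}) ∪ {f}) ∩ (F ∩ F')).ncard + 1 := by omega
      rw [hEq, add_one_mul] at hmin
      omega
  -- conclude
  have hmain : (T₁.edgeSet ∩ (F ∩ F')).ncard ≤ coverage G w (F ∩ F') := by
    have hss : T₁.edgeSet ∩ (F ∩ F') ⊆ T₂.edgeSet ∩ (F ∩ F') :=
      fun x hx => ⟨hsub hx, hx.2⟩
    exact (Set.ncard_le_ncard hss (Set.toFinite _)).trans hT₂c.le
  have hie := Set.ncard_inter_add_ncard_union (T₁.edgeSet ∩ F) (T₁.edgeSet ∩ F')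
    (Set.toFinite _) (Set.toFinite _)
  have e1 : (T₁.edgeSet ∩ F) ∩ (T₁.edgeSet ∩ F') = T₁.edgeSet ∩ (F ∩ F') := by
    ext x
    simp only [Set.mem_inter_iff]
    tauto
  have e2 : (T₁.edgeSet ∩ F) ∪ (T₁.edgeSet ∩ F') = T₁.edgeSet ∩ (F ∪ F') := by
    ext x
    simp only [Set.mem_inter_iff, Set.mem_union]
    tauto
  rw [e1, e2] at hie
  have hcF := hcov_le F T₁ hT₁mst
  have hcF' := hcov_le F' T₁ hT₁mst
  omega
end

section
/- Let G = (V,E) be a finite connected graph with edge-weight function w : E → ℝ and let S ⊆ E. For each weight value t, let S_t = {e ∈ S : w(e) = t}. Then coverage(S,(G,w)) = ∑_t coverage(S_t,(G,w)), where the sum ranges over the distinct weight values occurring on edges of S. -/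
open Classical

namespace MSTAux

open SimpleGraph

variable {V : Type*}

lemma preconnected_of_adj_reachable {H H' : SimpleGraph V}
    (h : ∀ a b, H.Adj a b → H'.Reachable a b) (hH : H.Preconnected) : H'.Preconnected := by
  intro x y
  obtain ⟨p⟩ := hH x y
  induction p with
  | nil => exact Reachable.refl _
  | cons ha _ ih => exact (h _ _ ha).trans ih

lemma side_walk {H : SimpleGraph V} (u v : V) {x y : V} (p : H.Walk x y)
    (hy : (H \ SimpleGraph.fromEdgeSet {s(u, v)}).Reachable u y ∨
      (H \ SimpleGraph.fromEdgeSet {s(u, v)}).Reachable v y) :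
    (H \ SimpleGraph.fromEdgeSet {s(u, v)}).Reachable u x ∨
      (H \ SimpleGraph.fromEdgeSet {s(u, v)}).Reachable v x := by
  induction p with
  | nil => exact hy
  | @cons x c y ha q ih =>
    have hc := ih hy
    by_cases hxc : s(x, c) = s(u, v)
    · rw [Sym2.eq_iff] at hxc
      rcases hxc with ⟨rfl, rfl⟩ | ⟨rfl, rfl⟩
      · exact Or.inl (Reachable.refl _)
      · exact Or.inr (Reachable.refl _)
    · have hadj : (H \ SimpleGraph.fromEdgeSet {s(u, v)}).Adj x c := by
        rw [sdiff_adj]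
        refine ⟨ha, fun hcon => hxc ?_⟩
        rw [fromEdgeSet_adj] at hcon
        simpa using hcon.1
      rcases hc with h | h
      · exact Or.inl (h.trans hadj.reachable.symm)
      · exact Or.inr (h.trans hadj.reachable.symm)

lemma side_dichotomy {H : SimpleGraph V} (hH : H.Preconnected) (u v x : V) :
    (H \ SimpleGraph.fromEdgeSet {s(u, v)}).Reachable u x ∨
      (H \ SimpleGraph.fromEdgeSet {s(u, v)}).Reachable v x := by
  obtain ⟨p⟩ := hH x u
  exact side_walk u v p (Or.inl (Reachable.refl u))

lemma exists_crossing_edge {H : SimpleGraph V} (P : V → Prop) :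
    ∀ {x y : V} (p : H.Walk x y), P x → ¬ P y →
      ∃ a b, H.Adj a b ∧ s(a, b) ∈ p.edges ∧ P a ∧ ¬ P b := by
  intro x y p
  induction p with
  | nil => exact fun h h' => absurd h h'
  | @cons x c y ha q ih =>
    intro hx hy
    by_cases hc : P c
    · obtain ⟨a, b, h1, h2, h3, h4⟩ := ih hc hy
      exact ⟨a, b, h1, by simp [h2], h3, h4⟩
    · exact ⟨x, c, ha, by simp, hx, hc⟩

lemma sep_aux {T : SimpleGraph V} {a b u v : V}
    {p : T.Walk u v} (hp : p.IsTrail) (hf : s(a, b) ∈ p.edges)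
    (hbr : ¬ (T \ SimpleGraph.fromEdgeSet {s(a, b)}).Reachable a b)
    (hu : (T \ SimpleGraph.fromEdgeSet {s(a, b)}).Reachable a u)
    (hr : (T \ SimpleGraph.fromEdgeSet {s(a, b)}).Reachable u v) : False := by
  classical
  have hb : b ∈ p.support := p.snd_mem_support_of_mem_edges hf
  have hv : (T \ SimpleGraph.fromEdgeSet {s(a, b)}).Reachable a v := hu.trans hr
  have key : ∀ {x y : V} (q : T.Walk x y),
      (T \ SimpleGraph.fromEdgeSet {s(a, b)}).Reachable a x →
      ¬ (T \ SimpleGraph.fromEdgeSet {s(a, b)}).Reachable a y → s(a, b) ∈ q.edges := by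
    intro x y q hx hy
    obtain ⟨a', b', hadj, hmem, hPa, hPb⟩ :=
      exists_crossing_edge (fun z => (T \ SimpleGraph.fromEdgeSet {s(a, b)}).Reachable a z)
        q hx hy
    by_cases hg : s(a', b') = s(a, b)
    · rwa [hg] at hmem
    · exfalso
      have hadj' : (T \ SimpleGraph.fromEdgeSet {s(a, b)}).Adj a' b' := by
        rw [sdiff_adj]
        refine ⟨hadj, fun hcon => hg ?_⟩
        rw [fromEdgeSet_adj] at hcon
        simpa using hcon.1
      exact hPb (hPa.trans hadj'.reachable)
  have h1 : s(a, b) ∈ (p.takeUntil b hb).edges := key _ hu hbr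
  have h2 : s(a, b) ∈ (p.dropUntil b hb).edges := by
    have := key (p.dropUntil b hb).reverse hv hbr
    rwa [SimpleGraph.Walk.edges_reverse, List.mem_reverse] at this
  have hnodup := hp.edges_nodup
  rw [← p.take_spec hb, SimpleGraph.Walk.edges_append] at hnodup
  exact (List.disjoint_of_nodup_append hnodup) h1 h2

lemma not_reachable_of_trail_mem {T : SimpleGraph V} (hpre : T.Preconnected)
    {a b u v : V} {p : T.Walk u v} (hp : p.IsTrail) (hf : s(a, b) ∈ p.edges)
    (hbr : ¬ (T \ SimpleGraph.fromEdgeSet {s(a, b)}).Reachable a b) :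
    ¬ (T \ SimpleGraph.fromEdgeSet {s(a, b)}).Reachable u v := by
  intro hr
  rcases side_dichotomy hpre a b u with hu | hu
  · exact sep_aux hp hf hbr hu hr
  · have hsw : s(b, a) = s(a, b) := Sym2.eq_swap
    refine sep_aux (a := b) (b := a) hp ?_ ?_ ?_ ?_
    · rw [hsw]; exact hf
    · rw [hsw]; intro h; exact hbr h.symm
    · rw [hsw]; exact hu
    · rw [hsw]; exact hr

lemma connected_delete {H : SimpleGraph V} (hH : H.Connected) {u v : V}
    (hr : (H \ SimpleGraph.fromEdgeSet {s(u, v)}).Reachable u v) :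
    (H \ SimpleGraph.fromEdgeSet {s(u, v)}).Connected := by
  haveI : Nonempty V := hH.nonempty
  refine ⟨preconnected_of_adj_reachable ?_ hH.preconnected⟩
  intro c d hcd
  by_cases h : s(c, d) = s(u, v)
  · rw [Sym2.eq_iff] at h
    rcases h with ⟨rfl, rfl⟩ | ⟨rfl, rfl⟩
    · exact hr
    · exact hr.symm
  · refine SimpleGraph.Adj.reachable ?_
    rw [sdiff_adj]
    refine ⟨hcd, fun hcon => h ?_⟩
    rw [fromEdgeSet_adj] at hcon
    simpa using hcon.1

lemma connected_delete' {H : SimpleGraph V} (hH : H.Connected) :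
    ∀ {e : Sym2 V}, e ∈ H.edgeSet → ¬ H.IsBridge e →
      (H \ SimpleGraph.fromEdgeSet {e}).Connected := by
  intro e
  induction e using Sym2.ind with
  | _ u v =>
    intro he hnb
    apply connected_delete hH
    by_contra hre
    exact hnb (isBridge_iff.mpr hre)

lemma edgeSet_delete (H : SimpleGraph V) (e : Sym2 V) :
    (H \ SimpleGraph.fromEdgeSet {e}).edgeSet = H.edgeSet \ {e} := by
  simp

lemma edgeSet_fromEdgeSet_singleton {u v : V} (huv : u ≠ v) :
    (SimpleGraph.fromEdgeSet {s(u, v)}).edgeSet = {s(u, v)} := by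
  rw [edgeSet_fromEdgeSet]
  ext x
  simp only [Set.mem_diff, Set.mem_singleton_iff, Set.mem_setOf_eq, and_iff_left_iff_imp]
  rintro rfl
  simp [huv]

section FiniteV

variable [Finite V]

lemma exists_spanning_tree (G : SimpleGraph V) (hG : G.Connected) :
    ∃ T, T ≤ G ∧ T.IsTree := by
  classical
  suffices h : ∀ (n : ℕ) (G : SimpleGraph V), G.edgeSet.ncard ≤ n → G.Connected →
      ∃ T, T ≤ G ∧ T.IsTree from h _ G le_rfl hG
  intro n
  induction n with
  | zero =>
    intro G hcard hG
    by_cases hac : G.IsAcyclic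
    · exact ⟨G, le_rfl, ⟨hG, hac⟩⟩
    · exfalso
      rw [isAcyclic_iff_forall_edge_isBridge] at hac
      push_neg at hac
      obtain ⟨e, he, -⟩ := hac
      have := (Set.ncard_pos (G.edgeSet.toFinite)).mpr ⟨e, he⟩
      omega
  | succ n ih =>
    intro G hcard hG
    by_cases hac : G.IsAcyclic
    · exact ⟨G, le_rfl, ⟨hG, hac⟩⟩
    rw [isAcyclic_iff_forall_edge_isBridge] at hac
    push_neg at hac
    obtain ⟨e, he, hnb⟩ := hac
    have hconn := connected_delete' hG he hnb
    have hcard' : (G \ SimpleGraph.fromEdgeSet {e}).edgeSet.ncard ≤ n := by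
      rw [edgeSet_delete, Set.ncard_diff_singleton_of_mem he]
      have hpos := (Set.ncard_pos (G.edgeSet.toFinite)).mpr ⟨e, he⟩
      omega
    obtain ⟨T, hTle, hTtree⟩ := ih _ hcard' hconn
    exact ⟨T, hTle.trans sdiff_le, hTtree⟩

lemma tree_ncard [Fintype V] {T : SimpleGraph V} (hT : T.IsTree) :
    T.edgeSet.ncard + 1 = Fintype.card V := by
  classical
  haveI : Fintype ↥T.edgeSet := Fintype.ofFinite _
  have h := hT.card_edgeFinset
  rw [← h, Set.ncard_eq_toFinset_card']
  congr 1

lemma card_le_of_connected [Fintype V] {H : SimpleGraph V} (hH : H.Connected) :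
    Fintype.card V ≤ H.edgeSet.ncard + 1 := by
  obtain ⟨T, hTle, hTtree⟩ := exists_spanning_tree H hH
  rw [← tree_ncard hTtree]
  have := Set.ncard_le_ncard (edgeSet_subset_edgeSet.mpr hTle) (H.edgeSet.toFinite)
  omega

lemma isTree_of_connected_of_card [Fintype V] {H : SimpleGraph V} (hH : H.Connected)
    (hc : H.edgeSet.ncard + 1 ≤ Fintype.card V) : H.IsTree := by
  refine ⟨hH, ?_⟩
  by_contra hac
  rw [isAcyclic_iff_forall_edge_isBridge] at hac
  push_neg at hac
  obtain ⟨e, he, hnb⟩ := hac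
  have hconn := connected_delete' hH he hnb
  have hle := card_le_of_connected hconn
  rw [edgeSet_delete, Set.ncard_diff_singleton_of_mem he] at hle
  have hpos := (Set.ncard_pos (H.edgeSet.toFinite)).mpr ⟨e, he⟩
  omega

lemma tree_eq_of_le {T T' : SimpleGraph V} (hT : T.IsTree) (hT' : T'.IsTree)
    (h : T' ≤ T) : T' = T := by
  classical
  cases nonempty_fintype V
  have h1 := tree_ncard hT
  have h2 := tree_ncard hT'
  have hsub := edgeSet_subset_edgeSet.mpr h
  have := Set.eq_of_subset_of_ncard_le hsub (by omega) (T.edgeSet.toFinite)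
  exact edgeSet_inj.mp this

lemma isTree_swap {T : SimpleGraph V} (hT : T.IsTree) {a b u v : V}
    (hf : T.Adj a b) (huv : u ≠ v)
    (hu : (T \ SimpleGraph.fromEdgeSet {s(a, b)}).Reachable a u)
    (hv : (T \ SimpleGraph.fromEdgeSet {s(a, b)}).Reachable b v) :
    ((T \ SimpleGraph.fromEdgeSet {s(a, b)}) ⊔ SimpleGraph.fromEdgeSet {s(u, v)}).IsTree := by
  classical
  cases nonempty_fintype V
  have hfe : s(a, b) ∈ T.edgeSet := hf
  have hbr : ¬ (T \ SimpleGraph.fromEdgeSet {s(a, b)}).Reachable a b :=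
    (isBridge_iff.mp ((isAcyclic_iff_forall_edge_isBridge.mp hT.2) hfe))
  have hT2conn :
      ((T \ SimpleGraph.fromEdgeSet {s(a, b)}) ⊔ SimpleGraph.fromEdgeSet {s(u, v)}).Connected := by
    haveI : Nonempty V := hT.1.nonempty
    refine ⟨preconnected_of_adj_reachable ?_ hT.1.preconnected⟩
    intro c d hcd
    by_cases hcde : s(c, d) = s(a, b)
    · have huvadj : (SimpleGraph.fromEdgeSet {s(u, v)}).Adj u v := by
        rw [fromEdgeSet_adj]; exact ⟨rfl, huv⟩
      have hab : ((T \ SimpleGraph.fromEdgeSet {s(a, b)}) ⊔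
          SimpleGraph.fromEdgeSet {s(u, v)}).Reachable a b :=
        ((hu.mono le_sup_left).trans
          ((huvadj.reachable.mono le_sup_right).trans (hv.mono le_sup_left).symm))
      rw [Sym2.eq_iff] at hcde
      rcases hcde with ⟨rfl, rfl⟩ | ⟨rfl, rfl⟩
      · exact hab
      · exact hab.symm
    · have : (T \ SimpleGraph.fromEdgeSet {s(a, b)}).Adj c d := by
        rw [sdiff_adj]
        refine ⟨hcd, fun hcon => hcde ?_⟩
        rw [fromEdgeSet_adj] at hcon
        simpa using hcon.1
      exact (this.reachable.mono le_sup_left)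
  have hnot : s(u, v) ∉ T.edgeSet \ {s(a, b)} := by
    rintro ⟨hmem, hne⟩
    have huvadj : (T \ SimpleGraph.fromEdgeSet {s(a, b)}).Adj u v := by
      rw [sdiff_adj]
      refine ⟨hmem, fun hcon => hne ?_⟩
      rw [fromEdgeSet_adj] at hcon
      simpa using hcon.1
    exact hbr ((hu.trans huvadj.reachable).trans hv.symm)
  have hedge : ((T \ SimpleGraph.fromEdgeSet {s(a, b)}) ⊔
      SimpleGraph.fromEdgeSet {s(u, v)}).edgeSet = (T.edgeSet \ {s(a, b)}) ∪ {s(u, v)} := by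
    rw [edgeSet_sup, edgeSet_delete, edgeSet_fromEdgeSet_singleton huv]
  apply isTree_of_connected_of_card hT2conn
  rw [hedge, Set.union_singleton,
    Set.ncard_insert_of_notMem hnot ((T.edgeSet.toFinite).diff),
    Set.ncard_diff_singleton_of_mem hfe]
  have htc := tree_ncard hT
  have hpos := (Set.ncard_pos (T.edgeSet.toFinite)).mpr ⟨_, hfe⟩
  omega

lemma fromEdgeSet_singleton_le {G : SimpleGraph V} {e : Sym2 V} (he : e ∈ G.edgeSet) :
    SimpleGraph.fromEdgeSet {e} ≤ G := by
  intro x y hxy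
  rw [SimpleGraph.fromEdgeSet_adj] at hxy
  obtain ⟨h1, _⟩ := hxy
  rw [Set.mem_singleton_iff] at h1
  rw [← SimpleGraph.mem_edgeSet, h1]
  exact he

variable {w : Sym2 V → ℝ}

lemma treeWeight_swap {T T2 : SimpleGraph V} {e f : Sym2 V}
    (h2 : T2.edgeSet = (T.edgeSet \ {f}) ∪ {e}) (hf : f ∈ T.edgeSet) (he : e ∉ T.edgeSet) :
    treeWeight w T2 = treeWeight w T - w f + w e := by
  classical
  unfold treeWeight
  have hset : T2.edgeSet.toFinite.toFinset
      = insert e ((T.edgeSet.toFinite.toFinset).erase f) := by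
    ext x
    simp only [Set.Finite.mem_toFinset, h2, Set.mem_union, Set.mem_diff,
      Set.mem_singleton_iff, Finset.mem_insert, Finset.mem_erase]
    tauto
  rw [hset, Finset.sum_insert (by
    simp only [Finset.mem_erase, Set.Finite.mem_toFinset]
    rintro ⟨-, hmem⟩
    exact he hmem)]
  rw [Finset.sum_erase_eq_sub (by simpa [Set.Finite.mem_toFinset] using hf)]
  ring

lemma exists_MST (G : SimpleGraph V) (hG : G.Connected) : ∃ T, IsMST G w T := by
  classical
  haveI : Finite (SimpleGraph V) :=
    Finite.of_injective _ SimpleGraph.edgeSet_injective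
  obtain ⟨T0, hT0le, hT0⟩ := exists_spanning_tree G hG
  have hfin : {T : SimpleGraph V | IsSpanningTree G T}.Finite := Set.toFinite _
  obtain ⟨T, hTmem, hTmin⟩ := Finset.exists_min_image hfin.toFinset (treeWeight w)
    ⟨T0, by rw [Set.Finite.mem_toFinset]; exact ⟨hT0le, hT0⟩⟩
  rw [Set.Finite.mem_toFinset] at hTmem
  exact ⟨T, hTmem, fun T' h' => hTmin T' (hfin.mem_toFinset.mpr h')⟩

lemma exchange {G T T' : SimpleGraph V}
    (hT : IsMST G w T) (hT' : IsMST G w T') {e : Sym2 V}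
    (he' : e ∈ T'.edgeSet) (he : e ∉ T.edgeSet) :
    ∃ f T2, f ∈ T.edgeSet ∧ f ∉ T'.edgeSet ∧ w f = w e ∧ IsMST G w T2 ∧
      T2.edgeSet = (T.edgeSet \ {f}) ∪ {e} := by
  classical
  cases nonempty_fintype V
  revert he' he
  induction e using Sym2.ind with
  | _ u v =>
  intro he' he
  obtain ⟨⟨hTle, hTt⟩, hTmin⟩ := hT
  obtain ⟨⟨hT'le, hT't⟩, hT'min⟩ := hT'
  have huv : u ≠ v := (T'.mem_edgeSet.mp he').ne
  obtain ⟨p, hp, -⟩ := hTt.existsUnique_path u v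
  have hPu : (T' \ SimpleGraph.fromEdgeSet {s(u, v)}).Reachable u u := Reachable.refl u
  have hPv : ¬ (T' \ SimpleGraph.fromEdgeSet {s(u, v)}).Reachable u v :=
    (isBridge_iff.mp ((isAcyclic_iff_forall_edge_isBridge.mp hT't.2) he'))
  obtain ⟨a, b, hadj, hmem, hPa, hPb⟩ :=
    exists_crossing_edge (fun x => (T' \ SimpleGraph.fromEdgeSet {s(u, v)}).Reachable u x)
      p hPu hPv
  have hfT : s(a, b) ∈ T.edgeSet := p.edges_subset_edgeSet hmem
  have hfe : s(a, b) ≠ s(u, v) := fun hh => he (hh ▸ hfT)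
  have hfT' : s(a, b) ∉ T'.edgeSet := by
    intro hmem'
    have hadj' : (T' \ SimpleGraph.fromEdgeSet {s(u, v)}).Adj a b := by
      rw [sdiff_adj]
      refine ⟨hmem', fun hcon => hfe ?_⟩
      rw [fromEdgeSet_adj] at hcon
      simpa using hcon.1
    exact hPb (hPa.trans hadj'.reachable)
  have hbrT : ¬ (T \ SimpleGraph.fromEdgeSet {s(a, b)}).Reachable a b :=
    (isBridge_iff.mp ((isAcyclic_iff_forall_edge_isBridge.mp hTt.2) hfT))
  have hsep : ¬ (T \ SimpleGraph.fromEdgeSet {s(a, b)}).Reachable u v :=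
    not_reachable_of_trail_mem hTt.1.preconnected hp.isTrail hmem hbrT
  have hT2tree : ((T \ SimpleGraph.fromEdgeSet {s(a, b)}) ⊔
      SimpleGraph.fromEdgeSet {s(u, v)}).IsTree := by
    rcases side_dichotomy hTt.1.preconnected a b u with hua | hub
    · have hvb : (T \ SimpleGraph.fromEdgeSet {s(a, b)}).Reachable b v := by
        rcases side_dichotomy hTt.1.preconnected a b v with hva | hvb
        · exact absurd (hua.symm.trans hva) hsep
        · exact hvb
      exact isTree_swap hTt hadj huv hua hvb
    · have hva : (T \ SimpleGraph.fromEdgeSet {s(a, b)}).Reachable a v := by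
        rcases side_dichotomy hTt.1.preconnected a b v with hva | hvb
        · exact hva
        · exact absurd (hub.symm.trans hvb) hsep
      have hsw : s(b, a) = s(a, b) := Sym2.eq_swap
      have := isTree_swap (a := b) (b := a) hTt hadj.symm huv (by rw [hsw]; exact hub)
        (by rw [hsw]; exact hva)
      rwa [hsw] at this
  set T2 := (T \ SimpleGraph.fromEdgeSet {s(a, b)}) ⊔ SimpleGraph.fromEdgeSet {s(u, v)} with hT2def
  have hT2edge : T2.edgeSet = (T.edgeSet \ {s(a, b)}) ∪ {s(u, v)} := by
    rw [hT2def, edgeSet_sup, edgeSet_delete, edgeSet_fromEdgeSet_singleton huv]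
  have hT2le : T2 ≤ G :=
    sup_le (sdiff_le.trans hTle)
      (fromEdgeSet_singleton_le ((edgeSet_subset_edgeSet.mpr hT'le) he'))
  have hT2w : treeWeight w T2 = treeWeight w T - w s(a, b) + w s(u, v) :=
    treeWeight_swap hT2edge hfT he
  have hT'2tree : ((T' \ SimpleGraph.fromEdgeSet {s(u, v)}) ⊔
      SimpleGraph.fromEdgeSet {s(a, b)}).IsTree := by
    have hvb' : (T' \ SimpleGraph.fromEdgeSet {s(u, v)}).Reachable v b := by
      rcases side_dichotomy hT't.1.preconnected u v b with h1 | h1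
      · exact absurd h1 hPb
      · exact h1
    exact isTree_swap hT't (T'.mem_edgeSet.mp he') hadj.ne hPa hvb'
  set T'2 := (T' \ SimpleGraph.fromEdgeSet {s(u, v)}) ⊔ SimpleGraph.fromEdgeSet {s(a, b)}
    with hT'2def
  have hT'2edge : T'2.edgeSet = (T'.edgeSet \ {s(u, v)}) ∪ {s(a, b)} := by
    rw [hT'2def, edgeSet_sup, edgeSet_delete, edgeSet_fromEdgeSet_singleton hadj.ne]
  have hT'2le : T'2 ≤ G :=
    sup_le (sdiff_le.trans hT'le)
      (fromEdgeSet_singleton_le ((edgeSet_subset_edgeSet.mpr hTle) hfT))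
  have hT'2w : treeWeight w T'2 = treeWeight w T' - w s(u, v) + w s(a, b) :=
    treeWeight_swap hT'2edge he' hfT'
  have h1 : treeWeight w T ≤ treeWeight w T2 := hTmin T2 ⟨hT2le, hT2tree⟩
  have h2 : treeWeight w T' ≤ treeWeight w T'2 := hT'min T'2 ⟨hT'2le, hT'2tree⟩
  rw [hT2w] at h1
  rw [hT'2w] at h2
  have hw : w s(a, b) = w s(u, v) := by linarith
  refine ⟨s(a, b), T2, hfT, hfT', hw, ⟨⟨hT2le, hT2tree⟩, ?_⟩, hT2edge⟩
  intro T'' h''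
  have : treeWeight w T2 = treeWeight w T := by rw [hT2w, hw]; ring
  rw [this]
  exact hTmin T'' h''

lemma class_ncard_eq (t : ℝ) : ∀ (n : ℕ) {G T T' : SimpleGraph V},
    IsMST G w T → IsMST G w T' → (T'.edgeSet \ T.edgeSet).ncard ≤ n →
    {g ∈ T.edgeSet | w g = t}.ncard = {g ∈ T'.edgeSet | w g = t}.ncard := by
  intro n
  induction n with
  | zero =>
    intro G T T' hT hT' hcard
    have hemp : T'.edgeSet \ T.edgeSet = ∅ :=
      (Set.ncard_eq_zero ((T'.edgeSet.toFinite).diff)).mp (Nat.le_zero.mp hcard)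
    rw [tree_eq_of_le hT.1.2 hT'.1.2
      (edgeSet_subset_edgeSet.mp (Set.diff_eq_empty.mp hemp))]
  | succ n ih =>
    intro G T T' hT hT' hcard
    by_cases hemp : T'.edgeSet \ T.edgeSet = ∅
    · rw [tree_eq_of_le hT.1.2 hT'.1.2
        (edgeSet_subset_edgeSet.mp (Set.diff_eq_empty.mp hemp))]
    obtain ⟨e, he⟩ := Set.nonempty_iff_ne_empty.mpr hemp
    obtain ⟨f, T2, hfT, hfT', hwfe, hT2, hT2edge⟩ := exchange hT hT' he.1 he.2
    have hnefe : f ≠ e := fun h => he.2 (h ▸ hfT)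
    have hstep : T'.edgeSet \ T2.edgeSet = (T'.edgeSet \ T.edgeSet) \ {e} := by
      ext g
      rw [hT2edge]
      by_cases hge : g = e
      · subst hge; simp
      by_cases hgf : g = f
      · subst hgf; simp [hfT']
      simp [hge, hgf]
    have hpos := (Set.ncard_pos ((T'.edgeSet.toFinite).diff)).mpr ⟨e, he⟩
    have hcard2 : (T'.edgeSet \ T2.edgeSet).ncard ≤ n := by
      rw [hstep, Set.ncard_diff_singleton_of_mem he]
      omega
    have hrec := ih hT2 hT' hcard2
    rw [← hrec]
    by_cases hwe : w e = t
    · have hwf : w f = t := by rw [hwfe]; exact hwe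
      have hnefe : f ≠ e := fun h => he.2 (h ▸ hfT)
      have hseteq : {g ∈ T2.edgeSet | w g = t}
          = ({g ∈ T.edgeSet | w g = t} \ {f}) ∪ {e} := by
        ext g
        rw [hT2edge]
        by_cases hge : g = e
        · subst hge; simp [hwe]
        by_cases hgf : g = f
        · subst hgf; simp [hnefe]
        simp [hge, hgf]
      have hfmem : f ∈ {g ∈ T.edgeSet | w g = t} := ⟨hfT, hwf⟩
      have hfinT : ({g ∈ T.edgeSet | w g = t}).Finite := Set.toFinite _
      rw [hseteq, Set.union_singleton,
        Set.ncard_insert_of_notMem (fun hc => he.2 hc.1.1) (hfinT.diff),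
        Set.ncard_diff_singleton_of_mem hfmem]
      have hposf := (Set.ncard_pos hfinT).mpr ⟨f, hfmem⟩
      omega
    · have hwf : w f ≠ t := by rw [hwfe]; exact hwe
      congr 1
      ext g
      rw [hT2edge]
      by_cases hge : g = e
      · subst hge; simp [hwe]
      by_cases hgf : g = f
      · subst hgf; simp [hwf]
      simp [hge, hgf]

lemma align_class (t : ℝ) : ∀ (n : ℕ) {G T T' : SimpleGraph V},
    IsMST G w T → IsMST G w T' → ({g ∈ T'.edgeSet | w g = t} \ T.edgeSet).ncard ≤ n →
    ∃ T2, IsMST G w T2 ∧ {g ∈ T'.edgeSet | w g = t} ⊆ T2.edgeSet ∧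
      {g ∈ T2.edgeSet | w g ≠ t} = {g ∈ T.edgeSet | w g ≠ t} := by
  intro n
  induction n with
  | zero =>
    intro G T T' hT hT' hcard
    have hemp : {g ∈ T'.edgeSet | w g = t} \ T.edgeSet = ∅ :=
      (Set.ncard_eq_zero (Set.toFinite _)).mp (Nat.le_zero.mp hcard)
    exact ⟨T, hT, Set.diff_eq_empty.mp hemp, rfl⟩
  | succ n ih =>
    intro G T T' hT hT' hcard
    by_cases hemp : {g ∈ T'.edgeSet | w g = t} \ T.edgeSet = ∅
    · exact ⟨T, hT, Set.diff_eq_empty.mp hemp, rfl⟩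
    obtain ⟨e, he⟩ := Set.nonempty_iff_ne_empty.mpr hemp
    obtain ⟨f, T2, hfT, hfT', hwfe, hT2, hT2edge⟩ := exchange hT hT' he.1.1 he.2
    have hwe : w e = t := he.1.2
    have hwf : w f = t := by rw [hwfe]; exact hwe
    have hstep : {g ∈ T'.edgeSet | w g = t} \ T2.edgeSet
        = ({g ∈ T'.edgeSet | w g = t} \ T.edgeSet) \ {e} := by
      ext g
      rw [hT2edge]
      by_cases hge : g = e
      · subst hge; simp
      by_cases hgf : g = f
      · subst hgf; simp [hfT']
      simp [hge, hgf]
    have hcard2 : ({g ∈ T'.edgeSet | w g = t} \ T2.edgeSet).ncard ≤ n := by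
      rw [hstep, Set.ncard_diff_singleton_of_mem he]
      have hpos := (Set.ncard_pos ((Set.toFinite _).diff (t := T.edgeSet))).mpr ⟨e, he⟩
      omega
    obtain ⟨T3, hT3, hsub3, heq3⟩ := ih hT2 hT' hcard2
    refine ⟨T3, hT3, hsub3, ?_⟩
    rw [heq3]
    ext g
    rw [hT2edge]
    by_cases hge : g = e
    · subst hge; simp [hwe]
    by_cases hgf : g = f
    · subst hgf; simp [hwf]
    simp [hge, hgf]

lemma swap_class {G T T' : SimpleGraph V} (hT : IsMST G w T) (hT' : IsMST G w T') (t : ℝ) :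
    ∃ T2, IsMST G w T2 ∧ {g ∈ T2.edgeSet | w g = t} = {g ∈ T'.edgeSet | w g = t} ∧
      {g ∈ T2.edgeSet | w g ≠ t} = {g ∈ T.edgeSet | w g ≠ t} := by
  obtain ⟨T2, hT2, hsub, hne⟩ := align_class t _ hT hT' le_rfl
  have hsub' : {g ∈ T'.edgeSet | w g = t} ⊆ {g ∈ T2.edgeSet | w g = t} :=
    fun g hg => ⟨hsub hg, hg.2⟩
  have hcard := class_ncard_eq t _ hT2 hT' le_rfl
  have heq := Set.eq_of_subset_of_ncard_le hsub' (le_of_eq hcard) (Set.toFinite _)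
  exact ⟨T2, hT2, heq.symm, hne⟩

end FiniteV

end MSTAux

/-- Coverage decomposes as the sum of the coverages of the weight classes of `S`. -/
theorem coverage_eq_sum_weight_classes {V : Type*} [Finite V] (G : SimpleGraph V)
    (hG : G.Connected) (w : Sym2 V → ℝ) (S : Set (Sym2 V)) (hS : S ⊆ G.edgeSet) :
    coverage G w S = ∑ t ∈ S.toFinite.toFinset.image w, coverage G w {e ∈ S | w e = t} := by
  classical
  set F := S.toFinite.toFinset.image w with hF
  have hc : ∀ (A : Set (Sym2 V)), Nat.card ↥A = A.toFinite.toFinset.card := fun A => by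
    rw [Nat.card_coe_set_eq, Set.ncard_eq_toFinset_card]
  have fib : ∀ T : SimpleGraph V, Nat.card ↥(T.edgeSet ∩ S)
      = ∑ t ∈ F, Nat.card ↥(T.edgeSet ∩ {e ∈ S | w e = t}) := by
    intro T
    rw [hc]
    rw [Finset.card_eq_sum_card_fiberwise (f := w) (t := F) (fun x hx => by
      rw [Finset.mem_coe, Set.Finite.mem_toFinset] at hx
      exact Finset.mem_image_of_mem w ((Set.Finite.mem_toFinset _).mpr hx.2))]
    refine Finset.sum_congr rfl (fun t ht => ?_)
    rw [hc]
    congr 1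
    ext x
    simp only [Finset.mem_filter, Set.Finite.mem_toFinset, Set.mem_inter_iff,
      Set.mem_setOf_eq]
    tauto
  have hne : ∀ S' : Set (Sym2 V),
      {n | ∃ T, IsMST G w T ∧ n = Nat.card ↥(T.edgeSet ∩ S')}.Nonempty := by
    intro S'
    obtain ⟨T, hT⟩ := MSTAux.exists_MST (w := w) G hG
    exact ⟨_, T, hT, rfl⟩
  have h0 : ∃ T, IsMST G w T ∧ coverage G w S = Nat.card ↥(T.edgeSet ∩ S) :=
    Nat.sInf_mem (hne S)
  obtain ⟨T0, hT0, hT0card⟩ := h0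
  have hsim : ∀ F' : Finset ℝ, ∃ T, IsMST G w T ∧ ∀ t ∈ F',
      Nat.card ↥(T.edgeSet ∩ {e ∈ S | w e = t}) = coverage G w {e ∈ S | w e = t} := by
    intro F'
    induction F' using Finset.induction_on with
    | empty =>
      obtain ⟨T, hT⟩ := MSTAux.exists_MST (w := w) G hG
      exact ⟨T, hT, by simp⟩
    | @insert t F'' htF ih =>
      obtain ⟨T, hT, hTall⟩ := ih
      have h1 : ∃ T', IsMST G w T' ∧ coverage G w {e ∈ S | w e = t}
          = Nat.card ↥(T'.edgeSet ∩ {e ∈ S | w e = t}) := Nat.sInf_mem (hne _)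
      obtain ⟨T', hT', hT'card⟩ := h1
      obtain ⟨T2, hT2, hclass_t, hclass_ne⟩ := MSTAux.swap_class hT hT' t
      refine ⟨T2, hT2, ?_⟩
      intro u hu
      rcases Finset.mem_insert.mp hu with rfl | hu'
      · have hseteq : T2.edgeSet ∩ {e ∈ S | w e = u} = T'.edgeSet ∩ {e ∈ S | w e = u} := by
          ext g
          have hgiff := Set.ext_iff.mp hclass_t g
          simp only [Set.mem_setOf_eq] at hgiff
          simp only [Set.mem_inter_iff, Set.mem_setOf_eq]
          tauto
        rw [hseteq]
        exact hT'card.symm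
      · have hut : u ≠ t := fun h => htF (h ▸ hu')
        have hseteq : T2.edgeSet ∩ {e ∈ S | w e = u} = T.edgeSet ∩ {e ∈ S | w e = u} := by
          ext g
          have hgiff := Set.ext_iff.mp hclass_ne g
          simp only [Set.mem_setOf_eq] at hgiff
          simp only [Set.mem_inter_iff, Set.mem_setOf_eq]
          constructor
          · rintro ⟨hg, hgS, hgw⟩
            exact ⟨(hgiff.mp ⟨hg, by rw [hgw]; exact hut⟩).1, hgS, hgw⟩
          · rintro ⟨hg, hgS, hgw⟩
            exact ⟨(hgiff.mpr ⟨hg, by rw [hgw]; exact hut⟩).1, hgS, hgw⟩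
        rw [hseteq]
        exact hTall u hu'
  obtain ⟨Tstar, hTstar, hTstarcard⟩ := hsim F
  apply le_antisymm
  · have hle : coverage G w S ≤ Nat.card ↥(Tstar.edgeSet ∩ S) :=
      Nat.sInf_le ⟨Tstar, hTstar, rfl⟩
    rw [fib Tstar] at hle
    calc coverage G w S ≤ ∑ t ∈ F, Nat.card ↥(Tstar.edgeSet ∩ {e ∈ S | w e = t}) := hle
      _ = ∑ t ∈ F, coverage G w {e ∈ S | w e = t} :=
        Finset.sum_congr rfl (fun t ht => hTstarcard t ht)
  · rw [hT0card, fib T0]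
    exact Finset.sum_le_sum fun t _ => Nat.sInf_le ⟨T0, hT0, rfl⟩
end

section
/- Consider an instance of the Unbounded Knapsack Problem with n ≥ 1 items having positive integer weights w_1, …, w_n, positive integer profits p_1, …, p_n, and integer capacity W ≥ 0, where item 1 has the maximum profit-to-weight ratio: p_1/w_1 ≥ p_i/w_i for all i. Let P* be the maximum of ∑_{i=1}^n p_i x_i over all x ∈ ℕ^n with ∑_{i=1}^n w_i x_i ≤ W. If P* > ∑_{i=2}^n p_1 p_i, then there exists a feasible x ∈ ℕ^n with ∑_{i=1}^n w_i x_i ≤ W, ∑_{i=1}^n p_i x_i = P*, and x_1 ≥ 1. -/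
theorem Pi.single_le_of_le_apply {ι α : Type*} [DecidableEq ι] [AddMonoid α] [PartialOrder α]
    [CanonicallyOrderedAdd α] {x : ι → α} {i : ι} {a : α} (ha : a ≤ x i) : Pi.single i a ≤ x := by
  intro k
  rcases eq_or_ne k i with rfl | hk
  · simpa using ha
  · simp [hk]

section WeightedSum

variable {ι : Type*} [Fintype ι] [DecidableEq ι]

theorem sum_mul_add_single_apply {R : Type*} [NonUnitalNonAssocSemiring R] (f y : ι → R) (j : ι)
    (b : R) : ∑ k, f k * (y + Pi.single j b : ι → R) k = ∑ k, f k * y k + f j * b := by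
  simp only [Pi.add_apply, mul_add, Finset.sum_add_distrib, Pi.single_apply, mul_ite, mul_zero,
    Finset.sum_ite_eq', Finset.mem_univ, if_true]

theorem sum_mul_exchange_add {x : ι → ℕ} {i : ι} {a : ℕ} (ha : a ≤ x i) (f : ι → ℕ) (j : ι)
    (b : ℕ) :
    ∑ k, f k * (x - Pi.single i a + Pi.single j b : ι → ℕ) k + f i * a =
      ∑ k, f k * x k + f j * b := by
  conv_rhs => rw [← tsub_add_cancel_of_le (Pi.single_le_of_le_apply ha)]
  rw [sum_mul_add_single_apply, sum_mul_add_single_apply]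
  ring

end WeightedSum

theorem exists_lt_of_sum_mul_lt_sum_mul {ι : Type*} {s : Finset ι} {p x : ι → ℕ} {c : ℕ}
    (h : ∑ i ∈ s, c * p i < ∑ i ∈ s, p i * x i) : ∃ i ∈ s, c < x i := by
  obtain ⟨i, hi, hlt⟩ := Finset.exists_lt_of_sum_lt h
  exact ⟨i, hi, Nat.lt_of_mul_lt_mul_left (mul_comm c (p i) ▸ hlt)⟩

theorem knapsack_optimal_uses_best_item_general (n : ℕ) (hn : 0 < n) (w p : Fin n → ℕ)
    (hp : ∀ i, 0 < p i) (W : ℕ)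
    (hratio : ∀ i, p i * w ⟨0, hn⟩ ≤ p ⟨0, hn⟩ * w i)
    (P : ℕ)
    (hP : IsGreatest {q | ∃ x : Fin n → ℕ, (∑ i, w i * x i ≤ W) ∧ q = ∑ i, p i * x i} P)
    (hbig : (∑ i ∈ Finset.univ.filter (fun i => i ≠ ⟨0, hn⟩), p ⟨0, hn⟩ * p i) < P) :
    ∃ x : Fin n → ℕ, (∑ i, w i * x i ≤ W) ∧ (∑ i, p i * x i = P) ∧ 1 ≤ x ⟨0, hn⟩ := by
  set i₀ : Fin n := ⟨0, hn⟩
  obtain ⟨x, hxW, rfl⟩ := hP.1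
  by_cases hx₀ : 1 ≤ x i₀
  · exact ⟨x, hxW, rfl, hx₀⟩
  have hsupp : ∑ k ∈ Finset.univ.filter (· ≠ i₀), p k * x k = ∑ k, p k * x k :=
    Finset.sum_filter_of_ne fun k _ hk => by rintro rfl; simp_all
  rw [← hsupp] at hbig
  obtain ⟨i, hi, hxi⟩ := exists_lt_of_sum_mul_lt_sum_mul hbig
  have hi₀ : i ≠ i₀ := (Finset.mem_filter.mp hi).2
  -- Trade `p i₀` copies of item `i` for `p i` copies of item `i₀`: same profit, no more weight.
  set z : Fin n → ℕ := x - Pi.single i (p i₀) + Pi.single i₀ (p i)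
  have hzw := sum_mul_exchange_add hxi.le w i₀ (p i)
  have hzp := sum_mul_exchange_add hxi.le p i₀ (p i)
  refine ⟨z, ?_, ?_, ?_⟩
  · linarith [hratio i]
  · linarith [mul_comm (p i) (p i₀)]
  · simp only [z, Pi.add_apply, Pi.single_eq_same]
    exact (hp i).trans_le (Nat.le_add_left _ _)

/-- In the unbounded knapsack problem, if item `1` (indexed by `⟨0, hn⟩`) has the maximum
profit-to-weight ratio and the optimal profit `P` exceeds `∑_{i ≠ 1} p 1 * p i`, then some
optimal solution uses at least one copy of item `1`. -/
theorem knapsack_optimal_uses_best_item (n : ℕ) (hn : 0 < n) (w p : Fin n → ℕ)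
    (hw : ∀ i, 0 < w i) (hp : ∀ i, 0 < p i) (W : ℕ)
    (hratio : ∀ i, p i * w ⟨0, hn⟩ ≤ p ⟨0, hn⟩ * w i)
    (P : ℕ)
    (hP : IsGreatest {q | ∃ x : Fin n → ℕ, (∑ i, w i * x i ≤ W) ∧ q = ∑ i, p i * x i} P)
    (hbig : (∑ i ∈ Finset.univ.filter (fun i => i ≠ ⟨0, hn⟩), p ⟨0, hn⟩ * p i) < P) :
    ∃ x : Fin n → ℕ, (∑ i, w i * x i ≤ W) ∧ (∑ i, p i * x i = P) ∧ 1 ≤ x ⟨0, hn⟩ :=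
  knapsack_optimal_uses_best_item_general n hn w p hp W hratio P hP hbig
end

section
/- Let ε > 0, 0 < δ < 1, and 0 < η < min(ε/4, 1/4). Let n be a positive integer with δn an integer and n > 1/((ε/2 − 2η)·(1/2 − 2η)·δ²). Let T_1, …, T_k be a partition of an n-element set into k nonempty parts with |T_1| ≤ |T_2| ≤ ⋯ ≤ |T_k| and k > δn·(1/2 + ε/2), and suppose |T_1| ≤ δn. Let i be the maximum index such that |T_1 ∪ ⋯ ∪ T_i| ≤ δn, and let A = T_1 ∪ ⋯ ∪ T_i. Then |A| ≥ (1/2 + 2η)·δn. -/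
/-- Pure real-arithmetic core of the counting argument. -/
lemma prefix_union_large_arith (D n a ti kr ir η ε : ℝ)
    (hη0 : 0 < η) (hη1 : η < ε / 4) (hη2 : η < 1 / 4) (hD : 0 < D)
    (h1 : D < ti + a) (h2 : (kr - ir) * ti ≤ n - a) (h3 : ir ≤ a) (h0 : 0 ≤ ir)
    (h4 : kr > D * (1 / 2 + ε / 2))
    (hbig' : n < (ε / 2 - 2 * η) * D * ((1 / 2 - 2 * η) * D))
    (hcon : a < (1 / 2 + 2 * η) * D) : False := by
  have p1 : 0 < ε / 2 - 2 * η := by linarith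
  have p2 : 0 < (1 : ℝ) / 2 - 2 * η := by linarith
  have t1 : (1 / 2 - 2 * η) * D < ti := by nlinarith
  have t2 : (ε / 2 - 2 * η) * D < kr - ir := by nlinarith
  have hm : (ε / 2 - 2 * η) * D * ((1 / 2 - 2 * η) * D) < (kr - ir) * ti :=
    mul_lt_mul'' t2 t1 (by positivity) (by positivity)
  linarith

/-- If `T 0, …, T (k-1)` is a partition of an `n`-element set into `k` nonempty parts listed in
nondecreasing order of size, with `k > δn(1/2 + ε/2)` and `|T 0| ≤ δn`, and `A` is the longest
prefix union of parts of size at most `δn` (attained at the maximal index `i`), then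
`|A| ≥ (1/2 + 2η)·δn`. -/
theorem prefix_union_large {α : Type*} [DecidableEq α] (ε δ η : ℝ)
    (hε : 0 < ε) (hδ0 : 0 < δ) (hδ1 : δ < 1)
    (hη0 : 0 < η) (hη : η < min (ε / 4) (1 / 4))
    (n : ℕ) (hn : 0 < n) (hδn : ∃ m : ℕ, (m : ℝ) = δ * n)
    (hbig : (n : ℝ) > 1 / ((ε / 2 - 2 * η) * (1 / 2 - 2 * η) * δ ^ 2))
    (k : ℕ) (hkpos : 0 < k) (T : Fin k → Finset α)
    (hdisj : ∀ a b : Fin k, a ≠ b → Disjoint (T a) (T b))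
    (hne : ∀ a : Fin k, (T a).Nonempty)
    (hcard : (Finset.univ.biUnion T).card = n)
    (hsorted : ∀ a b : Fin k, a ≤ b → (T a).card ≤ (T b).card)
    (hk : (k : ℝ) > δ * n * (1 / 2 + ε / 2))
    (hT1 : ((T ⟨0, hkpos⟩).card : ℝ) ≤ δ * n)
    (i : ℕ) (hi1 : 1 ≤ i) (hik : i ≤ k)
    (hprefix :
      ((((Finset.univ.filter fun t : Fin k => (t : ℕ) < i).biUnion T).card : ℝ) ≤ δ * n))
    (hmax : i < k →
      ¬ ((((Finset.univ.filter fun t : Fin k => (t : ℕ) < i + 1).biUnion T).card : ℝ) ≤ δ * n)) :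
    (1 / 2 + 2 * η) * δ * n
      ≤ (((Finset.univ.filter fun t : Fin k => (t : ℕ) < i).biUnion T).card : ℝ) := by
  have hη1 : η < ε / 4 := lt_of_lt_of_le hη (min_le_left _ _)
  have hη2 : η < 1 / 4 := lt_of_lt_of_le hη (min_le_right _ _)
  have hnpos : (0 : ℝ) < n := Nat.cast_pos.mpr hn
  have hsum : ∀ s : Finset (Fin k), (s.biUnion T).card = ∑ t ∈ s, (T t).card :=
    fun s => Finset.card_biUnion fun a _ b _ hab => hdisj a b hab
  have hi_lt_k : i < k := by
    rcases lt_or_eq_of_le hik with h | h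
    · exact h
    exfalso
    have hUniv : (Finset.univ.filter fun t : Fin k => (t : ℕ) < i) = Finset.univ := by
      ext t; simpa using lt_of_lt_of_le t.isLt h.ge
    rw [hUniv, hcard] at hprefix
    nlinarith
  set j : Fin k := ⟨i, hi_lt_k⟩ with hj
  set S := Finset.univ.filter fun t : Fin k => (t : ℕ) < i with hSdef
  set Sc := Finset.univ.filter fun t : Fin k => ¬ (t : ℕ) < i with hScdef
  have hjS : j ∉ S := by simp [hSdef, hj]
  have hins : (Finset.univ.filter fun t : Fin k => (t : ℕ) < i + 1) = insert j S := by
    ext t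
    simp only [hSdef, Finset.mem_filter, Finset.mem_univ, true_and, Finset.mem_insert]
    constructor
    · intro h
      rcases Nat.lt_succ_iff_lt_or_eq.mp h with h | h
      · exact Or.inr h
      · exact Or.inl (Fin.ext h)
    · rintro (rfl | h)
      · exact Nat.lt_succ_self _
      · exact Nat.lt_succ_of_lt h
  have hmax' := hmax hi_lt_k
  rw [hins, hsum, Finset.sum_insert hjS, not_le] at hmax'
  rw [hsum] at hprefix ⊢
  have hScard : S.card = i := by
    have hSI : S = Finset.Iio j := by
      ext t; simp [hSdef, hj, Fin.lt_def, -Fin.val_fin_lt]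
    rw [hSI, Fin.card_Iio]
  have hia : i ≤ ∑ t ∈ S, (T t).card := by
    calc i = ∑ _t ∈ S, 1 := by rw [Finset.sum_const, smul_eq_mul, mul_one, hScard]
    _ ≤ ∑ t ∈ S, (T t).card :=
      Finset.sum_le_sum fun t _ => Finset.card_pos.mpr (hne t)
  have htot : ∑ t ∈ S, (T t).card + ∑ t ∈ Sc, (T t).card = n := by
    rw [← hcard, hsum Finset.univ, hSdef, hScdef]
    exact Finset.sum_filter_add_sum_filter_not _ _ _
  have hSc_card : Sc.card = k - i := by
    have h := Finset.card_filter_add_card_filter_not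
      (s := (Finset.univ : Finset (Fin k))) (p := fun t : Fin k => (t : ℕ) < i)
    simp only [Finset.card_univ, Fintype.card_fin, ← hSdef, ← hScdef] at h
    omega
  have hb : (k - i) * (T j).card ≤ ∑ t ∈ Sc, (T t).card := by
    rw [← hSc_card]
    have h := Finset.card_nsmul_le_sum Sc (fun t => (T t).card) ((T j).card)
      (fun t ht => by
        apply hsorted
        simp only [hScdef, Finset.mem_filter, Finset.mem_univ, true_and, not_lt] at ht
        exact ht)
    simpa using h
  by_contra hcon
  push_neg at hcon
  -- assemble real inequalities and apply the arithmetic lemma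
  have hDpos : (0 : ℝ) < δ * n := by positivity
  have hcpos : 0 < (ε / 2 - 2 * η) * (1 / 2 - 2 * η) * δ ^ 2 := by
    have : 0 < ε / 2 - 2 * η := by linarith
    have : 0 < (1 : ℝ) / 2 - 2 * η := by linarith
    positivity
  have hbig1 : 1 < (ε / 2 - 2 * η) * (1 / 2 - 2 * η) * δ ^ 2 * n := by
    rw [gt_iff_lt, div_lt_iff₀ hcpos] at hbig
    linarith
  have hbig' : (n : ℝ) < (ε / 2 - 2 * η) * (δ * n) * ((1 / 2 - 2 * η) * (δ * n)) := by
    nlinarith [mul_lt_mul_of_pos_left hbig1 hnpos]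
  have h1 : δ * n < ((T j).card : ℝ) + ((∑ t ∈ S, (T t).card : ℕ) : ℝ) := by
    push_cast at hmax' ⊢
    linarith
  have h2 : ((k : ℝ) - i) * ((T j).card : ℝ) ≤ (n : ℝ) - ((∑ t ∈ S, (T t).card : ℕ) : ℝ) := by
    have hb' : (((k - i) * (T j).card : ℕ) : ℝ) ≤ ((∑ t ∈ Sc, (T t).card : ℕ) : ℝ) :=
      Nat.cast_le.mpr hb
    have htot' : ((∑ t ∈ S, (T t).card : ℕ) : ℝ) + ((∑ t ∈ Sc, (T t).card : ℕ) : ℝ) = n := by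
      exact_mod_cast congrArg (Nat.cast : ℕ → ℝ) htot
    push_cast [Nat.cast_sub hik] at hb' htot' ⊢
    linarith
  have h3 : (i : ℝ) ≤ ((∑ t ∈ S, (T t).card : ℕ) : ℝ) := by exact_mod_cast hia
  have hcon' : ((∑ t ∈ S, (T t).card : ℕ) : ℝ) < (1 / 2 + 2 * η) * (δ * n) := by
    rw [← mul_assoc]; exact hcon
  exact prefix_union_large_arith (δ * n) n (((∑ t ∈ S, (T t).card : ℕ) : ℝ))
    ((T j).card : ℝ) k i η ε hη0 hη1 hη2 hDpos h1 h2 h3 (Nat.cast_nonneg i)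
    hk hbig' hcon'
end

section
/- Let G = (V,E) be a finite connected graph with |V| = n ≥ 2 and let m ≥ 1. Construct the graph G' from G by adding, for each edge e = uv ∈ E, a set K_e of m new vertices forming a clique, and joining every vertex of K_e to both u and v. Fix F ⊆ E and assign weight 1 to every edge of F and to every newly added edge, and weight 0 to every edge of E∖F. Then the minimum weight of a spanning tree of G' equals m·|E| + c(E∖F) − 1, where c(E∖F) is the number of connected components of the spanning subgraph (V, E∖F) of G. -/
open Classical

/-- The number of connected components of the spanning subgraph with edge set `H`. -/
noncomputable def numComponents {V : Type*} (H : Set (Sym2 V)) : ℕ :=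
  Nat.card (SimpleGraph.fromEdgeSet H).ConnectedComponent

/-- The graph `G'` obtained from `G` by adding, for each edge `e` of `G`, a clique `K_e` of `m`
new vertices, each joined to both endpoints of `e`. -/
def augGraph {V : Type*} (G : SimpleGraph V) (m : ℕ) :
    SimpleGraph (V ⊕ (G.edgeSet × Fin m)) where
  Adj a b :=
    match a, b with
    | Sum.inl u, Sum.inl v => G.Adj u v
    | Sum.inl u, Sum.inr p => u ∈ (p.1 : Sym2 V)
    | Sum.inr p, Sum.inl u => u ∈ (p.1 : Sym2 V)
    | Sum.inr p, Sum.inr q => p.1 = q.1 ∧ p.2 ≠ q.2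
  symm := by
    constructor
    rintro (u | ⟨e, i⟩) (v | ⟨f, j⟩) h
    · exact h.symm
    · exact h
    · exact h
    · exact ⟨h.1.symm, h.2.symm⟩
  loopless := by
    constructor
    rintro (u | ⟨e, i⟩) h
    · exact h.ne rfl
    · exact h.2 rfl

/-- The weight function on `G'` induced by an edge set `F ⊆ E(G)`: original edges outside `F`
get weight `0`, while all edges of `F` and all newly added edges get weight `1`. -/
noncomputable def augWeight {V : Type*} (G : SimpleGraph V) (m : ℕ) (F : Set (Sym2 V)) :
    Sym2 (V ⊕ (G.edgeSet × Fin m)) → ℝ :=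
  fun e => if e ∈ Sym2.map Sum.inl '' (G.edgeSet \ F) then 0 else 1

/-!
With weight `0` on an edge set `Z` and `1` elsewhere, a spanning tree `T` weighs `|T \ Z|`.
The `Z`-edges of `T` form a forest, and a forest on `V` with `k` edges has `|V| - k`
components, at least as many as `(V, Z)`; since `T` has `|V| - 1` edges, `|T \ Z| ≥ c(Z) - 1`.
Extending a spanning forest of `(V, Z)` to a spanning tree attains this bound. In `G'` the
zero-weight edges are the copies of `E \ F`, and their spanning subgraph consists of `(V, E \ F)`
together with the `m·|E|` new vertices, all isolated.
-/

open SimpleGraph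

namespace SimpleGraph

variable {V : Type*} {G : SimpleGraph V}

theorem Reachable.apply_eq_of_forall_adj {β : Sort*} {f : V → β}
    (hf : ∀ ⦃u v⦄, G.Adj u v → f u = f v) {x y : V} (h : G.Reachable x y) : f x = f y := by
  obtain ⟨p⟩ := h
  induction p with
  | nil => rfl
  | cons hadj _ ih => exact (hf hadj).trans ih

theorem card_connectedComponent_bot :
    Nat.card (⊥ : SimpleGraph V).ConnectedComponent = Nat.card V :=
  (Nat.card_eq_of_bijective _ ⟨fun _ _ h => reachable_bot.mp (ConnectedComponent.exact h),
    Quot.mk_surjective⟩).symm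

theorem card_connectedComponent_sup_edge_add_one [Finite V] {u v : V}
    (huv : ¬G.Reachable u v) :
    Nat.card (G ⊔ edge u v).ConnectedComponent + 1 = Nat.card G.ConnectedComponent := by
  set cu := G.connectedComponentMk u
  set cv := G.connectedComponentMk v
  have hne : cu ≠ cv := fun h => huv (ConnectedComponent.exact h)
  have huv' : u ≠ v := by rintro rfl; exact huv .rfl
  -- Sending `cv` to `cu` is constant along the edges of `G ⊔ edge u v`, so it inverts the
  -- induced map on components away from `cv`.
  let merge : V → G.ConnectedComponent := fun x =>
    if G.connectedComponentMk x = cv then cu else G.connectedComponentMk x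
  have hmerge : ∀ ⦃x y⦄, (G ⊔ edge u v).Adj x y → merge x = merge y := by
    rintro x y (h | h)
    · simp only [merge, ConnectedComponent.connectedComponentMk_eq_of_adj h]
    · rw [edge_adj] at h
      rcases h with ⟨⟨rfl, rfl⟩ | ⟨rfl, rfl⟩, -⟩ <;> simp [merge, cu, cv]
  let φ : ({cv}ᶜ : Set G.ConnectedComponent) → (G ⊔ edge u v).ConnectedComponent :=
    fun c => c.1.map (Hom.ofLE le_sup_left)
  have hφ : φ.Bijective := by
    constructor
    · rintro ⟨c, hc⟩ ⟨d, hd⟩ h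
      induction c using ConnectedComponent.ind with | h x => ?_
      induction d using ConnectedComponent.ind with | h y => ?_
      have hcd : merge x = merge y := (ConnectedComponent.exact h).apply_eq_of_forall_adj hmerge
      rw [Set.mem_compl_singleton_iff] at hc hd
      simp only [merge, if_neg hc, if_neg hd] at hcd
      exact Subtype.ext hcd
    · intro c
      induction c using ConnectedComponent.ind with | h x => ?_
      by_cases hx : G.connectedComponentMk x = cv
      · refine ⟨⟨cu, hne⟩, ConnectedComponent.sound ?_⟩
        have hvx : G.Reachable v x := ConnectedComponent.exact hx.symm
        exact (Adj.reachable (by simp [edge_adj, huv'] : (G ⊔ edge u v).Adj u v)).trans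
          (hvx.mono le_sup_left)
      · exact ⟨⟨_, hx⟩, rfl⟩
  rw [← Nat.card_eq_of_bijective φ hφ, Nat.card_coe_set_eq, ← Set.ncard_add_ncard_compl {cv},
    Set.ncard_singleton, add_comm]

theorem IsAcyclic.card_edgeSet_add_card_connectedComponent [Finite V] (hG : G.IsAcyclic) :
    Nat.card G.edgeSet + Nat.card G.ConnectedComponent = Nat.card V := by
  induction hn : Nat.card G.edgeSet generalizing G with
  | zero =>
    have : G = ⊥ := by
      rwa [Nat.card_coe_set_eq, Set.ncard_eq_zero, edgeSet_eq_empty] at hn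
    subst this
    simp [card_connectedComponent_bot]
  | succ n ih =>
    obtain ⟨e, he⟩ : G.edgeSet.Nonempty := by
      rw [Nat.card_coe_set_eq] at hn
      exact Set.nonempty_of_ncard_ne_zero (by omega)
    induction e using Sym2.ind with | h u v => ?_
    have hbridge : ¬(G.deleteEdges {s(u, v)}).Reachable u v :=
      isAcyclic_iff_forall_adj_isBridge.mp hG he
    have hsup : G.deleteEdges {s(u, v)} ⊔ edge u v = G := by
      rw [← edgeSet_inj, edgeSet_sup, edgeSet_deleteEdges, edgeSet_edge_of_ne (G.ne_of_adj he),
        Set.sdiff_union_of_subset (Set.singleton_subset_iff.mpr he)]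
    have hcard : Nat.card (G.deleteEdges {s(u, v)}).edgeSet = n := by
      rw [Nat.card_coe_set_eq, edgeSet_deleteEdges, Set.ncard_sdiff_singleton_of_mem he]
      rw [Nat.card_coe_set_eq] at hn
      omega
    have h := card_connectedComponent_sup_edge_add_one hbridge
    rw [hsup] at h
    have := ih (hG.anti (deleteEdges_le _)) hcard
    omega

theorem IsTree.numComponents_le [Finite V] (hG : G.IsTree) (Z : Set (Sym2 V)) :
    numComponents Z ≤ Nat.card ↥(G.edgeSet \ Z) + 1 := by
  have hle : G.deleteEdges Zᶜ ≤ fromEdgeSet Z := by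
    rw [le_fromEdgeSet_iff, edgeSet_deleteEdges, Set.sdiff_compl]
    exact Set.inter_subset_right
  have hforest :=
    (hG.isAcyclic.anti (G.deleteEdges_le Zᶜ)).card_edgeSet_add_card_connectedComponent
  have htree := (isTree_iff_connected_and_card.mp hG).2
  have hsplit := Set.ncard_inter_add_ncard_sdiff_eq_ncard G.edgeSet Z
  have hmono := ConnectedComponent.card_le_card_of_le hle
  simp only [Nat.card_coe_set_eq, edgeSet_deleteEdges, Set.sdiff_compl] at *
  unfold numComponents
  omega

theorem Connected.exists_isTree_le_card_edgeSet_sdiff_add_one_le [Finite V] (hG : G.Connected)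
    {Z : Set (Sym2 V)} (hZ : Z ⊆ G.edgeSet) :
    ∃ T ≤ G, T.IsTree ∧ Nat.card ↥(T.edgeSet \ Z) + 1 ≤ numComponents Z := by
  obtain ⟨F, hFZ, hF, hreach⟩ := (fromEdgeSet Z).exists_isAcyclic_reachable_eq_le
  have hZG : fromEdgeSet Z ≤ G := G.fromEdgeSet_le.mpr (Set.sdiff_subset.trans hZ)
  obtain ⟨T, hFT, hTG, hT⟩ := hG.exists_isTree_le_of_le_of_isAcyclic (hFZ.trans hZG) hF
  refine ⟨T, hTG, hT, ?_⟩
  have hcomp : Nat.card F.ConnectedComponent = numComponents Z := by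
    unfold numComponents ConnectedComponent; rw [hreach]
  have hforest := hF.card_edgeSet_add_card_connectedComponent
  have htree := (isTree_iff_connected_and_card.mp hT).2
  have hsub : T.edgeSet \ Z ⊆ T.edgeSet \ F.edgeSet :=
    Set.sdiff_subset_sdiff_right ((F.le_fromEdgeSet_iff Z).mp hFZ)
  have := Set.ncard_le_ncard hsub
  have := Set.ncard_sdiff (edgeSet_mono hFT)
  have := Set.ncard_le_ncard (edgeSet_mono hFT)
  simp only [Nat.card_coe_set_eq] at *
  omega

section Sum

variable {W : Type*} (G : SimpleGraph V) (H : SimpleGraph W)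

def ConnectedComponent.sumEquiv :
    (G ⊕g H).ConnectedComponent ≃ G.ConnectedComponent ⊕ H.ConnectedComponent where
  toFun := ConnectedComponent.lift (Sum.map G.connectedComponentMk H.connectedComponentMk)
    fun _ _ p _ => p.reachable.apply_eq_of_forall_adj <| by
      rintro (u | u) (v | v) h <;> simp_all [Adj.reachable]
  invFun := Sum.elim (ConnectedComponent.map Embedding.sumInl.toHom)
    (ConnectedComponent.map Embedding.sumInr.toHom)
  left_inv c := c.ind <| by rintro (u | u) <;> rfl
  right_inv := by rintro (c | c) <;> exact c.ind fun _ => rfl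

theorem card_connectedComponent_sum [Finite V] [Finite W] :
    Nat.card (G ⊕g H).ConnectedComponent =
      Nat.card G.ConnectedComponent + Nat.card H.ConnectedComponent := by
  rw [Nat.card_congr (ConnectedComponent.sumEquiv G H), Nat.card_sum]

theorem fromEdgeSet_image_map_inl (S : Set (Sym2 V)) :
    fromEdgeSet (Sym2.map Sum.inl '' S) = fromEdgeSet S ⊕g (⊥ : SimpleGraph W) := by
  ext (u | u) (v | v)
  · rw [fromEdgeSet_adj, ← Sym2.map_mk, (Sym2.map.injective Sum.inl_injective).mem_set_image]
    simp
  all_goals simp [Sym2.exists]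

end Sum

end SimpleGraph

theorem numComponents_image_map_inl {V : Type*} [Finite V] (S : Set (Sym2 V)) (P : Type*)
    [Finite P] :
    numComponents (Sym2.map Sum.inl '' S : Set (Sym2 (V ⊕ P))) =
      numComponents S + Nat.card P := by
  rw [numComponents, fromEdgeSet_image_map_inl, card_connectedComponent_sum,
    card_connectedComponent_bot, numComponents]

theorem treeWeight_ite_mem {V : Type*} [Finite V] (Z : Set (Sym2 V)) (T : SimpleGraph V) :
    treeWeight (fun e => if e ∈ Z then 0 else 1) T = Nat.card ↥(T.edgeSet \ Z) := by
  rw [treeWeight, Finset.sum_ite, Finset.sum_const_zero, zero_add, Finset.sum_const, nsmul_one,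
    Nat.card_coe_set_eq, Set.ncard_eq_toFinset_card _ (Set.toFinite _)]
  congr 2
  ext
  simp

theorem isLeast_treeWeight_ite_mem {V : Type*} [Finite V] {H : SimpleGraph V} (hH : H.Connected)
    {Z : Set (Sym2 V)} (hZ : Z ⊆ H.edgeSet) :
    IsLeast
      {x : ℝ | ∃ T, IsSpanningTree H T ∧ x = treeWeight (fun e => if e ∈ Z then 0 else 1) T}
      (numComponents Z - 1) := by
  constructor
  · obtain ⟨T, hTH, hT, hle⟩ := hH.exists_isTree_le_card_edgeSet_sdiff_add_one_le hZ
    refine ⟨T, ⟨hTH, hT⟩, ?_⟩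
    rw [treeWeight_ite_mem, sub_eq_iff_eq_add]
    exact_mod_cast (hle.antisymm (hT.numComponents_le Z)).symm
  · rintro _ ⟨T, ⟨-, hT⟩, rfl⟩
    rw [treeWeight_ite_mem, sub_le_iff_le_add]
    exact_mod_cast hT.numComponents_le Z

section AugGraph

variable {V : Type*} (G : SimpleGraph V) (m : ℕ)

def augGraphInl : G →g augGraph G m := ⟨Sum.inl, id⟩

variable {G}

theorem augGraph_connected (hG : G.Connected) : (augGraph G m).Connected := by
  have := hG.nonempty
  have hbase : ∀ a, ∃ u, (augGraph G m).Reachable (Sum.inl u) a := by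
    rintro (u | ⟨⟨e, he⟩, i⟩)
    · exact ⟨u, .rfl⟩
    · exact ⟨e.out.1, Adj.reachable (Sym2.out_fst_mem e)⟩
  refine ⟨fun a b => ?_⟩
  obtain ⟨u, hu⟩ := hbase a
  obtain ⟨v, hv⟩ := hbase b
  exact hu.symm.trans (((hG.preconnected u v).map (augGraphInl G m)).trans hv)

end AugGraph

theorem augGraph_mst_weight_general {V : Type*} [Fintype V] (G : SimpleGraph V) (hG : G.Connected)
    (m : ℕ) (F : Set (Sym2 V)) :
    IsLeast {x : ℝ | ∃ T, IsSpanningTree (augGraph G m) T ∧ x = treeWeight (augWeight G m F) T}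
      ((m : ℝ) * Nat.card G.edgeSet + numComponents (G.edgeSet \ F) - 1) := by
  have hZ : Sym2.map Sum.inl '' (G.edgeSet \ F) ⊆ (augGraph G m).edgeSet := by
    rintro _ ⟨e, he, rfl⟩
    exact (augGraphInl G m).map_mem_edgeSet he.1
  have hcount : (m : ℝ) * Nat.card G.edgeSet + numComponents (G.edgeSet \ F) =
      numComponents
        (Sym2.map Sum.inl '' (G.edgeSet \ F) : Set (Sym2 (V ⊕ (G.edgeSet × Fin m)))) := by
    rw [numComponents_image_map_inl, Nat.card_prod, Nat.card_fin]
    push_cast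
    ring
  rw [hcount]
  exact isLeast_treeWeight_ite_mem (augGraph_connected m hG) hZ

/-- With the `augWeight` weights induced by `F ⊆ E(G)`, the minimum weight of a spanning tree
of `G'` is exactly `m·|E| + c(E \ F) - 1`. -/
theorem augGraph_mst_weight {V : Type*} [Fintype V] (G : SimpleGraph V) (hG : G.Connected)
    (hV : 2 ≤ Fintype.card V) (m : ℕ) (hm : 1 ≤ m) (F : Set (Sym2 V)) (hF : F ⊆ G.edgeSet) :
    IsLeast {x : ℝ | ∃ T, IsSpanningTree (augGraph G m) T ∧ x = treeWeight (augWeight G m F) T}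
      ((m : ℝ) * Nat.card G.edgeSet + numComponents (G.edgeSet \ F) - 1) :=
  augGraph_mst_weight_general G hG m F
end
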